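/- arXiv:2206.05767 — 10 statements merged into one kernel-verified Lean document; each statement's English description precedes it below -/
import Mathlib

section
/- Let R be an integral domain. An R-module M is a Lucas module if and only if M is a torsion-free injective R-module. -/
open CategoryTheory

universe u

/-- An ideal is dense if its annihilator in `R` is zero. -/
def Ideal.IsDense {R : Type u} [CommRing R] (I : Ideal R) : Prop :=
  ∀ r : R, (∀ a ∈ I, a * r = 0) → r = 0

/-- An ideal is semi-regular if it contains a finitely generated dense subideal. -/
def Ideal.IsSemiRegular {R : Type u} [CommRing R] (I : Ideal R) : Prop :=
  ∃ J : Ideal R, J ≤ I ∧ J.FG ∧ J.IsDense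

/-- Membership in `𝒬`: finitely generated semi-regular ideals. -/
def Ideal.IsInQ {R : Type u} [CommRing R] (I : Ideal R) : Prop :=
  I.FG ∧ I.IsSemiRegular

/-- An `R`-module is `𝒬`-torsion if every element is annihilated by some `I ∈ 𝒬`. -/
def IsQTorsion (R : Type u) [CommRing R] (M : Type u) [AddCommGroup M] [Module R M] : Prop :=
  ∀ x : M, ∃ I : Ideal R, I.IsInQ ∧ ∀ a ∈ I, a • x = 0

/-- An `R`-module is `𝒬`-torsion-free if no nonzero element is annihilated by any `I ∈ 𝒬`. -/
def IsQTorsionFree (R : Type u) [CommRing R] (M : Type u) [AddCommGroup M] [Module R M] : Prop :=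
  ∀ x : M, (∃ I : Ideal R, I.IsInQ ∧ ∀ a ∈ I, a • x = 0) → x = 0

/-- `Ext¹_R(A, B) = 0`. -/
def Ext1Vanishes (R : Type u) [CommRing R] (A B : Type u) [AddCommGroup A] [Module R A]
    [AddCommGroup B] [Module R B] : Prop :=
  Subsingleton (((Ext R (ModuleCat.{u} R) 1).obj (Opposite.op (ModuleCat.of R A))).obj
    (ModuleCat.of R B))

/-- A Lucas module is a `𝒬`-torsion-free module `M` with `Ext¹_R(R/I, M) = 0` for all `I ∈ 𝒬`. -/
def IsLucasModule (R : Type u) [CommRing R] (M : Type u) [AddCommGroup M] [Module R M] : Prop :=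
  IsQTorsionFree R M ∧ ∀ I : Ideal R, I.IsInQ → Ext1Vanishes R (R ⧸ I) M

/-!
Over a domain, every ideal in `𝒬` contains a nonzero element and every nonzero principal ideal
lies in `𝒬`, so `𝒬`-torsion-freeness is ordinary torsion-freeness. For `a ≠ 0` the sequence
`0 → R --a--> R → R/(a) → 0` is a projective resolution, through which `Ext¹(R/(a), M) = 0`
says exactly that `M` is `a`-divisible; a torsion-free divisible module over a domain satisfies
Baer's criterion. Conversely, `Ext¹(-, J)` vanishes for injective `J`, since `Hom(-, J)` turns
the exactness of a projective resolution in degree `1` into exactness of the `Hom` complex.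
-/

open Limits ZeroObject

namespace CategoryTheory

namespace ProjectiveResolution

variable {C : Type*} [Category* C] [Abelian C]

noncomputable def ofShortExactComplex (S : ShortComplex C) : ChainComplex C ℕ :=
  ChainComplex.of (fun | 0 => S.X₂ | 1 => S.X₁ | _ + 2 => 0)
    (fun | 0 => S.f | _ + 1 => 0)
    (fun | 0 => by simp | _ + 1 => by simp)

@[simp]
lemma ofShortExactComplex_d_one_zero (S : ShortComplex C) :
    (ofShortExactComplex S).d 1 0 = S.f := by
  simp [ofShortExactComplex, ChainComplex.of.d]

@[simp]
lemma ofShortExactComplex_d_two_one (S : ShortComplex C) :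
    (ofShortExactComplex S).d 2 1 = 0 := by
  simp [ofShortExactComplex, ChainComplex.of.d]
  rfl

instance (S : ShortComplex C) [Projective S.X₁] [Projective S.X₂] (n : ℕ) :
    Projective ((ofShortExactComplex S).X n) := by
  rcases n with _ | _ | n
  exacts [‹Projective S.X₂›, ‹Projective S.X₁›, Projective.zero_projective]

noncomputable def ofShortExact {S : ShortComplex C} (hS : S.ShortExact) [Projective S.X₁]
    [Projective S.X₂] : ProjectiveResolution S.X₃ where
  complex := ofShortExactComplex S
  π := (ChainComplex.toSingle₀Equiv _ _).symm
    ⟨S.g, by rw [ofShortExactComplex_d_one_zero]; exact S.zero⟩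
  quasiIso := ⟨fun n => by
    rcases n with _ | _ | n
    · rw [ChainComplex.quasiIsoAt₀_iff, ShortComplex.quasiIso_iff_of_zeros']
      · refine (ShortComplex.exact_and_epi_g_iff_of_iso ?_).2 ⟨hS.exact, hS.epi_g⟩
        refine ShortComplex.isoMk (Iso.refl _) (Iso.refl _) (Iso.refl _) ?_ ?_
        · erw [Category.id_comp, Category.comp_id]
          exact (ofShortExactComplex_d_one_zero S).symm
        · erw [Category.id_comp, Category.comp_id]
          exact
            (ChainComplex.toSingle₀Equiv_symm_apply_f_zero (C := ofShortExactComplex S) _ _).symm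
      all_goals rfl
    · rw [quasiIsoAt_iff_exactAt' _ _ (ChainComplex.exactAt_succ_single_obj _ _),
        HomologicalComplex.exactAt_iff' _ 2 1 0 (by simp) (by simp),
        ShortComplex.exact_iff_mono _ (ofShortExactComplex_d_two_one S)]
      change Mono ((ofShortExactComplex S).d 1 0)
      rw [ofShortExactComplex_d_one_zero]
      exact hS.mono_f
    · rw [quasiIsoAt_iff_exactAt' _ _ (ChainComplex.exactAt_succ_single_obj _ _),
        HomologicalComplex.exactAt_iff]
      exact ShortComplex.exact_of_isZero_X₂ _ (isZero_zero C)⟩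

@[simp]
lemma ofShortExact_complex {S : ShortComplex C} (hS : S.ShortExact) [Projective S.X₁]
    [Projective S.X₂] : (ofShortExact hS).complex = ofShortExactComplex S := rfl

variable {R : Type*} [Ring R] [Linear R C] [EnoughProjectives C]

lemma subsingleton_ext_one_iff {X : C} (P : ProjectiveResolution X) (Y : C) :
    Subsingleton (((Ext R C 1).obj (Opposite.op X)).obj Y) ↔
      ∀ g : P.complex.X 1 ⟶ Y, P.complex.d 2 1 ≫ g = 0 →
        ∃ f : P.complex.X 0 ⟶ Y, P.complex.d 1 0 ≫ f = g := by
  rw [← ModuleCat.isZero_iff_subsingleton, (P.isoExt 1 Y).isZero_iff,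
    ← HomologicalComplex.exactAt_iff_isZero_homology,
    HomologicalComplex.exactAt_iff' _ 0 1 2 (by simp) (by simp),
    ShortComplex.moduleCat_exact_iff]
  rfl

end ProjectiveResolution

lemma subsingleton_ext_one_of_injective {R : Type*} [Ring R] {C : Type*} [Category* C]
    [Abelian C] [Linear R C] [EnoughProjectives C] (X J : C) [Injective J] :
    Subsingleton (((Ext R C 1).obj (Opposite.op X)).obj J) := by
  let P := ProjectiveResolution.of X
  refine (P.subsingleton_ext_one_iff J).2 fun g hg => ?_
  exact ⟨(P.exact_succ 0).descToInjective g hg, (P.exact_succ 0).comp_descToInjective g hg⟩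

lemma ShortComplex.ShortExact.subsingleton_ext_one_iff {R : Type*} [Ring R]
    {C : Type*} [Category* C] [Abelian C] [Linear R C] [EnoughProjectives C]
    {S : ShortComplex C} (hS : S.ShortExact) [Projective S.X₁] [Projective S.X₂] (Y : C) :
    Subsingleton (((Ext R C 1).obj (Opposite.op S.X₃)).obj Y) ↔
      ∀ g : S.X₁ ⟶ Y, ∃ f : S.X₂ ⟶ Y, S.f ≫ f = g := by
  rw [(ProjectiveResolution.ofShortExact hS).subsingleton_ext_one_iff]
  simp only [ProjectiveResolution.ofShortExact_complex,
    ProjectiveResolution.ofShortExactComplex_d_one_zero,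
    ProjectiveResolution.ofShortExactComplex_d_two_one, zero_comp]
  exact forall_congr' fun g => ⟨fun h => h rfl, fun h _ => h⟩

end CategoryTheory

section Module

variable {R : Type u} [CommRing R]

lemma ModuleCat.shortExact_toSpanSingleton_mkQ {a : R} (ha : a ∈ nonZeroDivisors R) :
    (ShortComplex.mk (ModuleCat.ofHom (LinearMap.toSpanSingleton R R a))
      (ModuleCat.ofHom (Ideal.span {a}).mkQ) (by ext; simp)).ShortExact := by
  refine .mk' ?_ ((ModuleCat.mono_iff_injective _).2 fun r s hrs => ?_)
    ((ModuleCat.epi_iff_surjective _).2 (Submodule.mkQ_surjective _))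
  · rw [ShortComplex.ShortExact.moduleCat_exact_iff_function_exact, LinearMap.exact_iff]
    simp [Submodule.ker_mkQ, ← LinearMap.span_singleton_eq_range]
  · exact (mul_cancel_right_mem_nonZeroDivisors ha).1 hrs

lemma exists_smul_eq_of_ext1Vanishes {M : Type u} [AddCommGroup M] [Module R M] {a : R}
    (ha : a ∈ nonZeroDivisors R) (h : Ext1Vanishes R (R ⧸ Ideal.span {a}) M) (m : M) :
    ∃ n : M, a • n = m := by
  obtain ⟨f, hf⟩ := ((ModuleCat.shortExact_toSpanSingleton_mkQ ha).subsingleton_ext_one_iff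
    (ModuleCat.of R M)).1 h (ModuleCat.ofHom (LinearMap.toSpanSingleton R M m))
  refine ⟨f (1 : R), ?_⟩
  simpa [← map_smul] using congr($hf 1)

end Module

namespace Ideal

variable {R : Type u} [CommRing R]

lemma IsDense.ne_bot [Nontrivial R] {I : Ideal R} (hI : I.IsDense) : I ≠ ⊥ := by
  rintro rfl
  exact one_ne_zero (hI 1 fun a ha => by rw [(Submodule.mem_bot R).1 ha, zero_mul])

lemma IsInQ.ne_bot [Nontrivial R] {I : Ideal R} (hI : I.IsInQ) : I ≠ ⊥ := by
  obtain ⟨-, J, hJI, -, hJ⟩ := hI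
  exact ne_bot_of_le_ne_bot hJ.ne_bot hJI

lemma isInQ_span_singleton {a : R} (ha : a ∈ nonZeroDivisors R) : (span {a}).IsInQ := by
  have hfg : (span {a}).FG := ⟨{a}, by simp⟩
  refine ⟨hfg, span {a}, le_rfl, hfg, fun r hr => ?_⟩
  have hra : a * r = 0 := hr a (mem_span_singleton_self a)
  exact mem_nonZeroDivisors_iff_right.1 ha r (by rwa [mul_comm])

end Ideal

lemma isQTorsionFree_iff_noZeroSMulDivisors {R : Type u} [CommRing R] [IsDomain R] {M : Type u}
    [AddCommGroup M] [Module R M] : IsQTorsionFree R M ↔ NoZeroSMulDivisors R M := by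
  refine ⟨fun hM => ⟨fun {r x} hrx => or_iff_not_imp_left.2 fun hr => hM x ?_⟩,
    fun _ x ⟨I, hI, hIx⟩ => ?_⟩
  · refine ⟨Ideal.span {r}, Ideal.isInQ_span_singleton (mem_nonZeroDivisors_of_ne_zero hr), ?_⟩
    intro b hb
    obtain ⟨c, rfl⟩ := Ideal.mem_span_singleton'.1 hb
    rw [mul_smul, hrx, smul_zero]
  · obtain ⟨a, haI, ha⟩ := Submodule.exists_mem_ne_zero_of_ne_bot hI.ne_bot
    exact (smul_eq_zero.1 (hIx a haI)).resolve_left ha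

lemma Module.Baer.of_divisible_of_noZeroSMulDivisors {R : Type*} [CommRing R] [IsDomain R]
    {M : Type*} [AddCommGroup M] [Module R M] [NoZeroSMulDivisors R M]
    (hM : ∀ a : R, a ≠ 0 → ∀ m : M, ∃ n : M, a • n = m) : Module.Baer R M := by
  intro I g
  rcases eq_or_ne I ⊥ with rfl | hI
  · refine ⟨0, fun x hx => ?_⟩
    obtain rfl := (Submodule.mem_bot R).1 hx
    exact g.map_zero.symm
  obtain ⟨a, haI, ha⟩ := Submodule.exists_mem_ne_zero_of_ne_bot hI
  obtain ⟨y, hy⟩ := hM a ha (g ⟨a, haI⟩)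
  refine ⟨LinearMap.toSpanSingleton R M y, fun x hx => smul_right_injective M ha ?_⟩
  calc a • x • y = x • g ⟨a, haI⟩ := by rw [smul_comm, hy]
    _ = g (a • ⟨x, hx⟩) := by rw [← map_smul]; congr 1; ext; exact mul_comm x a
    _ = a • g ⟨x, hx⟩ := map_smul g a _

/-- Over an integral domain, an `R`-module is a Lucas module iff it is a
torsion-free injective module. -/
theorem lucas_iff_torsionFree_injective (R : Type u) [CommRing R] [IsDomain R]
    (M : Type u) [AddCommGroup M] [Module R M] :
    IsLucasModule R M ↔ (NoZeroSMulDivisors R M ∧ Module.Injective R M) := by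
  rw [IsLucasModule, isQTorsionFree_iff_noZeroSMulDivisors]
  refine and_congr_right fun _ => ⟨fun hExt => ?_, fun _ I _ => ?_⟩
  · refine Module.Baer.injective (Module.Baer.of_divisible_of_noZeroSMulDivisors fun a ha => ?_)
    have ha : a ∈ nonZeroDivisors R := mem_nonZeroDivisors_of_ne_zero ha
    exact exists_smul_eq_of_ext1Vanishes ha (hExt _ (Ideal.isInQ_span_singleton ha))
  · have := Module.injective_object_of_injective_module R M
    exact subsingleton_ext_one_of_injective _ _
end

section
/- Let R be a commutative ring. A 𝒬-torsion-free R-module M is a Lucas module if and only if Ext¹_R(T, M) = 0 for every 𝒬-torsion R-module T. -/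
open CategoryTheory

universe u

/-!
`Ext¹_R(A, M)` vanishes iff, for one (equivalently, by lifting along projectives, any) projective
presentation `K ↪ F ↠ A`, every homomorphism `K → M` extends to `F`; for `R ↠ R/I` this says that
every homomorphism `I → M` is multiplication by an element of `M`. As `R/I` is `𝒬`-torsion for
`I ∈ 𝒬`, one direction is immediate. Conversely, let `T` be `𝒬`-torsion and `φ : K → M`. Every
`x ∈ F` has `I • x ⊆ K` for some `I ∈ 𝒬`, and `a ↦ φ (a • x)` on `I` is multiplication by some
`mₓ ∈ M`. Since `𝒬` is closed under products and `M` is `𝒬`-torsion-free, `mₓ` is unique, so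
`x ↦ mₓ` is linear and extends `φ`.
-/

def Submodule.HomsExtend {R F : Type*} [CommRing R] [AddCommGroup F] [Module R F]
    (S : Submodule R F) (M : Type*) [AddCommGroup M] [Module R M] : Prop :=
  ∀ φ : S →ₗ[R] M, ∃ ψ : F →ₗ[R] M, ψ ∘ₗ S.subtype = φ

namespace Submodule

variable {R M F F' A : Type*} [CommRing R] [AddCommGroup M] [Module R M]
  [AddCommGroup F] [Module R F] [AddCommGroup F'] [Module R F'] [AddCommGroup A] [Module R A]

theorem homsExtend_range_iff {P₂ P₁ P₀ : Type*} [AddCommGroup P₂] [Module R P₂]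
    [AddCommGroup P₁] [Module R P₁] [AddCommGroup P₀] [Module R P₀]
    {d₂ : P₂ →ₗ[R] P₁} {d₁ : P₁ →ₗ[R] P₀} (hd : Function.Exact d₂ d₁) :
    (LinearMap.range d₁).HomsExtend M ↔
      ∀ φ : P₁ →ₗ[R] M, φ ∘ₗ d₂ = 0 → ∃ ψ : P₀ →ₗ[R] M, ψ ∘ₗ d₁ = φ := by
  have hd' : Function.Exact d₂ d₁.rangeRestrict := by
    rwa [LinearMap.exact_iff, LinearMap.ker_rangeRestrict, ← LinearMap.exact_iff]
  -- Maps `P₁ → M` killing `d₂` are exactly the maps factoring through `range d₁`.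
  have factor := LinearMap.exact_lcomp_of_exact_of_surjective M hd' d₁.surjective_rangeRestrict
  constructor
  · intro h φ hφ
    obtain ⟨φ', rfl⟩ := (factor φ).mp hφ
    obtain ⟨ψ, rfl⟩ := h φ'
    exact ⟨ψ, rfl⟩
  · intro h φ'
    obtain ⟨ψ, hψ⟩ := h (φ' ∘ₗ d₁.rangeRestrict) ((factor _).mpr ⟨φ', rfl⟩)
    exact ⟨ψ, d₁.surjective_rangeRestrict.injective_linearMapComp_right hψ⟩

theorem HomsExtend.ker_of_projective [Module.Projective R F] [Module.Projective R F']
    {π : F →ₗ[R] A} {π' : F' →ₗ[R] A} (hπ : Function.Surjective π)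
    (hπ' : Function.Surjective π') (h : (LinearMap.ker π').HomsExtend M) :
    (LinearMap.ker π).HomsExtend M := by
  obtain ⟨α, hα⟩ := Module.projective_lifting_property π' π hπ'
  obtain ⟨β, hβ⟩ := Module.projective_lifting_property π π' hπ
  have hα' : ∀ x, π' (α x) = π x := LinearMap.congr_fun hα
  have hβ' : ∀ x, π (β x) = π' x := LinearMap.congr_fun hβ
  let α₀ : LinearMap.ker π →ₗ[R] LinearMap.ker π' :=
    α.restrict fun x (hx : π x = 0) => show π' (α x) = 0 by rw [hα', hx]
  let β₀ : LinearMap.ker π' →ₗ[R] LinearMap.ker π :=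
    β.restrict fun x (hx : π' x = 0) => show π (β x) = 0 by rw [hβ', hx]
  -- `φ ∘ (id - βα) + ψ' ∘ α` restricts to `k ↦ φ (k - βαk) + φ (βαk)` on `ker π`.
  let ρ : F →ₗ[R] LinearMap.ker π :=
    (LinearMap.id - β ∘ₗ α).codRestrict _ fun x => by simp [hα', hβ']
  intro φ
  obtain ⟨ψ', hψ'⟩ := h (φ ∘ₗ β₀)
  refine ⟨φ ∘ₗ ρ + ψ' ∘ₗ α, LinearMap.ext fun k => ?_⟩
  have e : ψ' (α k) = φ (β₀ (α₀ k)) := LinearMap.congr_fun hψ' (α₀ k)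
  change φ (ρ k) + ψ' (α k) = φ k
  rw [e, ← map_add]
  congr 1
  ext
  exact sub_add_cancel (k : F) (β (α k))

theorem homsExtend_ker_iff_of_projective [Module.Projective R F] [Module.Projective R F']
    {π : F →ₗ[R] A} {π' : F' →ₗ[R] A} (hπ : Function.Surjective π)
    (hπ' : Function.Surjective π') :
    (LinearMap.ker π).HomsExtend M ↔ (LinearMap.ker π').HomsExtend M :=
  ⟨.ker_of_projective hπ' hπ, .ker_of_projective hπ hπ'⟩

end Submodule

section Ext

variable {R : Type u} [CommRing R] {A M : Type u} [AddCommGroup A] [Module R A]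
  [AddCommGroup M] [Module R M]

theorem ext1Vanishes_iff_of_projectiveResolution (P : ProjectiveResolution (ModuleCat.of R A)) :
    Ext1Vanishes R A M ↔
      ∀ φ : P.complex.X 1 →ₗ[R] M, φ ∘ₗ (P.complex.d 2 1).hom = 0 →
        ∃ ψ : P.complex.X 0 →ₗ[R] M, ψ ∘ₗ (P.complex.d 1 0).hom = φ := by
  rw [Ext1Vanishes, ((P.isoExt 1 _).toLinearEquiv).toEquiv.subsingleton_congr,
    ← ModuleCat.isZero_iff_subsingleton, ← HomologicalComplex.exactAt_iff_isZero_homology,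
    HomologicalComplex.exactAt_iff' _ 0 1 2 (by simp) (by simp), ShortComplex.moduleCat_exact_iff]
  refine ModuleCat.homEquiv.forall_congr fun φ => ?_
  refine imp_congr ?_ (ModuleCat.homEquiv.exists_congr fun ψ => ?_)
  · exact ModuleCat.hom_ext_iff (f := P.complex.d 2 1 ≫ φ) (g := 0)
  · exact ModuleCat.hom_ext_iff (f := P.complex.d 1 0 ≫ ψ) (g := φ)

theorem ext1Vanishes_iff_homsExtend_ker {F : Type u} [AddCommGroup F] [Module R F]
    [Module.Projective R F] {π : F →ₗ[R] A} (hπ : Function.Surjective π) :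
    Ext1Vanishes R A M ↔ (LinearMap.ker π).HomsExtend M := by
  let P := projectiveResolution (ModuleCat.of R A)
  have : Module.Projective R (P.complex.X 0) := by
    rw [IsProjective.iff_projective]
    exact (inferInstance : Projective (P.complex.X 0))
  have hP₀ : LinearMap.ker (P.π.f 0).hom = LinearMap.range (P.complex.d 1 0).hom :=
    P.exact₀.moduleCat_range_eq_ker.symm
  have hP₁ : Function.Exact (P.complex.d 2 1).hom (P.complex.d 1 0).hom :=
    (ShortComplex.ShortExact.moduleCat_exact_iff_function_exact _).mp (P.exact_succ 0)
  rw [ext1Vanishes_iff_of_projectiveResolution P, ← Submodule.homsExtend_range_iff hP₁, ← hP₀]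
  exact Submodule.homsExtend_ker_iff_of_projective
    ((ModuleCat.epi_iff_surjective (P.π.f 0)).mp inferInstance) hπ

theorem ext1Vanishes_quotient_iff (I : Ideal R) :
    Ext1Vanishes R (R ⧸ I) M ↔ I.HomsExtend M := by
  simpa using ext1Vanishes_iff_homsExtend_ker (M := M) I.mkQ_surjective

end Ext

section QTorsion

variable {R : Type u} [CommRing R]

theorem Ideal.isInQ_top : (⊤ : Ideal R).IsInQ :=
  have hfg : (⊤ : Ideal R).FG := ⟨{1}, by simp⟩
  ⟨hfg, ⊤, le_rfl, hfg, fun r hr => by simpa using hr 1 Submodule.mem_top⟩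

theorem Ideal.IsInQ.mul {I J : Ideal R} (hI : I.IsInQ) (hJ : J.IsInQ) : (I * J).IsInQ := by
  obtain ⟨hIfg, I', hI'le, hI'fg, hI'd⟩ := hI
  obtain ⟨hJfg, J', hJ'le, hJ'fg, hJ'd⟩ := hJ
  refine ⟨hIfg.mul hJfg, I' * J', Ideal.mul_mono hI'le hJ'le, hI'fg.mul hJ'fg, fun r hr => ?_⟩
  refine hJ'd r fun b hb => hI'd (b * r) fun a ha => ?_
  rw [← mul_assoc]
  exact hr (a * b) (Ideal.mul_mem_mul ha hb)

theorem isQTorsion_quotient {I : Ideal R} (hI : I.IsInQ) : IsQTorsion R (R ⧸ I) := by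
  intro x
  obtain ⟨r, rfl⟩ := Ideal.Quotient.mk_surjective x
  refine ⟨I, hI, fun a ha => ?_⟩
  rw [Algebra.smul_def, Ideal.Quotient.algebraMap_eq, ← map_mul, Ideal.Quotient.eq_zero_iff_mem]
  exact I.mul_mem_right r ha

variable {M F : Type u} [AddCommGroup M] [Module R M] [AddCommGroup F] [Module R F]
  {S : Submodule R F} (φ : S →ₗ[R] M)

/-- The value at `x` that any extension of `φ` to `F` is forced to take. -/
def IsQExtensionValue (x : F) (m : M) : Prop :=
  ∃ I : Ideal R, I.IsInQ ∧ ∀ a ∈ I, ∃ s : S, (s : F) = a • x ∧ φ s = a • m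

variable {φ} {x y : F} {m m' : M}

theorem IsQExtensionValue.eq (hM : IsQTorsionFree R M) (h : IsQExtensionValue φ x m)
    (h' : IsQExtensionValue φ x m') : m = m' := by
  obtain ⟨I, hI, hIx⟩ := h
  obtain ⟨J, hJ, hJx⟩ := h'
  refine sub_eq_zero.mp (hM _ ⟨I * J, hI.mul hJ, fun a ha => ?_⟩)
  obtain ⟨s, hs, hsm⟩ := hIx a (Ideal.mul_le_left ha)
  obtain ⟨s', hs', hsm'⟩ := hJx a (Ideal.mul_le_right ha)
  obtain rfl : s = s' := Subtype.ext (hs.trans hs'.symm)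
  rw [smul_sub, ← hsm, ← hsm', sub_self]

theorem IsQExtensionValue.add (h : IsQExtensionValue φ x m) (h' : IsQExtensionValue φ y m') :
    IsQExtensionValue φ (x + y) (m + m') := by
  obtain ⟨I, hI, hIx⟩ := h
  obtain ⟨J, hJ, hJy⟩ := h'
  refine ⟨I * J, hI.mul hJ, fun a ha => ?_⟩
  obtain ⟨s, hs, hsm⟩ := hIx a (Ideal.mul_le_left ha)
  obtain ⟨s', hs', hsm'⟩ := hJy a (Ideal.mul_le_right ha)
  exact ⟨s + s', by simp [hs, hs', smul_add], by simp [hsm, hsm', smul_add]⟩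

theorem IsQExtensionValue.smul (r : R) (h : IsQExtensionValue φ x m) :
    IsQExtensionValue φ (r • x) (r • m) := by
  obtain ⟨I, hI, hIx⟩ := h
  refine ⟨I, hI, fun a ha => ?_⟩
  obtain ⟨s, hs, hsm⟩ := hIx a ha
  exact ⟨r • s, by simp [hs, smul_comm r a], by simp [hsm, smul_comm r a]⟩

theorem isQExtensionValue_coe (s : S) : IsQExtensionValue φ s (φ s) :=
  ⟨⊤, Ideal.isInQ_top, fun a _ => ⟨a • s, rfl, map_smul φ a s⟩⟩

theorem exists_isQExtensionValue (hL : ∀ I : Ideal R, I.IsInQ → I.HomsExtend M)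
    (hx : ∃ I : Ideal R, I.IsInQ ∧ ∀ a ∈ I, a • x ∈ S) : ∃ m, IsQExtensionValue φ x m := by
  obtain ⟨I, hI, hIx⟩ := hx
  let θ : I →ₗ[R] M :=
    φ ∘ₗ (LinearMap.toSpanSingleton R F x ∘ₗ I.subtype).codRestrict S fun a => hIx a a.2
  obtain ⟨ψ, hψ⟩ := hL I hI θ
  refine ⟨ψ 1, I, hI, fun a ha => ⟨⟨a • x, hIx a ha⟩, rfl, ?_⟩⟩
  calc φ ⟨a • x, hIx a ha⟩ = θ ⟨a, ha⟩ := rfl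
    _ = ψ a := (LinearMap.congr_fun hψ ⟨a, ha⟩).symm
    _ = a • ψ 1 := by rw [← map_smul, smul_eq_mul, mul_one]

theorem Submodule.homsExtend_of_isQTorsionFree (hM : IsQTorsionFree R M)
    (hL : ∀ I : Ideal R, I.IsInQ → I.HomsExtend M)
    (hS : ∀ x : F, ∃ I : Ideal R, I.IsInQ ∧ ∀ a ∈ I, a • x ∈ S) : S.HomsExtend M := by
  intro φ
  choose g hg using fun x => exists_isQExtensionValue (φ := φ) hL (hS x)
  refine ⟨{ toFun := g
            map_add' := fun x y => (hg (x + y)).eq hM ((hg x).add (hg y))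
            map_smul' := fun r x => (hg (r • x)).eq hM ((hg x).smul r) },
    LinearMap.ext fun s => (hg s).eq hM (isQExtensionValue_coe s)⟩

end QTorsion

/-- A `𝒬`-torsion-free `R`-module `M` is a Lucas module iff
`Ext¹_R(T, M) = 0` for every `𝒬`-torsion `R`-module `T`. -/
theorem lucas_iff_ext_vanishes_on_torsion (R : Type u) [CommRing R]
    (M : Type u) [AddCommGroup M] [Module R M] (hM : IsQTorsionFree R M) :
    IsLucasModule R M ↔
      ∀ (T : Type u) [AddCommGroup T] [Module R T], IsQTorsion R T → Ext1Vanishes R T M := by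
  refine ⟨fun ⟨_, hL⟩ T _ _ hT => ?_, fun h => ⟨hM, fun I hI => h _ (isQTorsion_quotient hI)⟩⟩
  rw [ext1Vanishes_iff_homsExtend_ker (Finsupp.linearCombination_id_surjective R T)]
  refine Submodule.homsExtend_of_isQTorsionFree hM
    (fun I hI => (ext1Vanishes_quotient_iff I).mp (hL I hI)) fun x => ?_
  obtain ⟨I, hI, hIx⟩ := hT (Finsupp.linearCombination R id x)
  exact ⟨I, hI, fun a ha => by simp [hIx a ha]⟩
end

section
/- Let R be a commutative ring, M a Lucas R-module, and A a submodule of an R-module B such that B/A is 𝒬-torsion. Then every R-homomorphism f : A → M extends to an R-homomorphism g : B → M (i.e., g restricted to A equals f). -/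
open CategoryTheory

universe u

/-!
A maximal partial extension `p` of `f` (Zorn) is total: given `x`, some `I ∈ 𝒬` maps `x` into
the domain of `p`. Since `Ext¹(R/I, M) = 0`, the map `a ↦ p (a • x)` on `I` is multiplication by
some `m`, and `𝒬`-torsion-freeness of `M` extends `p (r • x) = r • m` to every `r` with
`r • x ∈ dom p`; so `x ↦ m` is compatible with `p` and extends it.

The vanishing of `Ext¹(F/K, M)` for projective `F` is turned into the extension property of
`K ≤ F` by comparing a projective resolution of `F/K` with the presentation `K → F → F/K`.
-/

namespace CategoryTheory.ProjectiveResolution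

open Limits

variable {R : Type*} [Ring R] {C : Type*} [Category C] [Abelian C] [Linear R C]
  [EnoughProjectives C]

theorem exists_d_comp_eq_of_isZero_ext_one {X Y : C} (P : ProjectiveResolution X)
    (hExt : IsZero (((Ext R C 1).obj (Opposite.op X)).obj Y))
    (ψ : P.complex.X 1 ⟶ Y) (hψ : P.complex.d 2 1 ≫ ψ = 0) :
    ∃ g : P.complex.X 0 ⟶ Y, P.complex.d 1 0 ≫ g = ψ := by
  have hexact : (P.complex.linearYonedaObj R Y).ExactAt 1 :=
    (HomologicalComplex.exactAt_iff_isZero_homology _ _).2 (hExt.of_iso (P.isoExt 1 Y).symm)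
  rw [HomologicalComplex.exactAt_iff' _ 0 1 2 (by simp) (by simp),
    ShortComplex.moduleCat_exact_iff] at hexact
  exact hexact ψ hψ

end CategoryTheory.ProjectiveResolution

theorem LinearMap.exists_extend_of_ext1Vanishes {R : Type u} [CommRing R]
    {F M : Type u} [AddCommGroup F] [Module R F] [Module.Projective R F]
    [AddCommGroup M] [Module R M] {K : Submodule R F} (hExt : Ext1Vanishes R (F ⧸ K) M)
    (φ : K →ₗ[R] M) : ∃ g : F →ₗ[R] M, g ∘ₗ K.subtype = φ := by
  let P := ProjectiveResolution.of (ModuleCat.of R (F ⧸ K))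
  let d := (P.complex.d 1 0).hom
  let π : P.complex.X 0 →ₗ[R] F ⧸ K := (P.π.f 0).hom
  have hπ : Function.Surjective π := (ModuleCat.epi_iff_surjective _).1 inferInstance
  have hπd : ∀ y, π (d y) = 0 := fun y => congr($(P.complex_d_comp_π_f_zero).hom y)
  have hdd : ∀ z, d (P.complex.d 2 1 z) = 0 := fun z => congr($(P.complex.d_comp_d 2 1 0).hom z)
  obtain ⟨α, hα⟩ : ∃ α : P.complex.X 0 →ₗ[R] F, K.mkQ ∘ₗ α = π :=
    Module.projective_lifting_property _ _ K.mkQ_surjective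
  obtain ⟨β, hβ⟩ : ∃ β : F →ₗ[R] P.complex.X 0, π ∘ₗ β = K.mkQ :=
    Module.projective_lifting_property _ _ hπ
  have hαd (y) : α (d y) ∈ K := by
    rw [← Submodule.Quotient.mk_eq_zero, ← K.mkQ_apply, ← LinearMap.comp_apply, hα, hπd]
  have hαβ (x) : x - α (β x) ∈ K := by
    rw [← Submodule.Quotient.mk_eq_zero, Submodule.Quotient.mk_sub, ← K.mkQ_apply,
      ← K.mkQ_apply, ← LinearMap.comp_apply K.mkQ α, hα, ← LinearMap.comp_apply π β, hβ, sub_self]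
  let ψ : P.complex.X 1 ⟶ ModuleCat.of R M :=
    ModuleCat.ofHom (φ ∘ₗ LinearMap.codRestrict K (α ∘ₗ d) hαd)
  obtain ⟨γ, hγ⟩ := P.exists_d_comp_eq_of_isZero_ext_one
    (@ModuleCat.isZero_of_subsingleton _ _ _ hExt) ψ (by
      ext z
      have : LinearMap.codRestrict K (α ∘ₗ d) hαd (P.complex.d 2 1 z) = 0 := by
        ext; simp [hdd]
      simp [ψ, this])
  -- On `K`, `γ ∘ β = φ ∘ α ∘ β` because `β` maps `K` into `ker π = im d`; the second summand
  -- corrects `α ∘ β` back to the identity.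
  refine ⟨γ.hom ∘ₗ β + φ ∘ₗ LinearMap.codRestrict K (LinearMap.id - α ∘ₗ β) hαβ, ?_⟩
  ext ⟨x, hx⟩
  obtain ⟨y, hy⟩ : ∃ y, d y = β x := by
    refine (ShortComplex.moduleCat_exact_iff _).1 P.exact₀ (β x) ?_
    change π (β x) = 0
    rw [← LinearMap.comp_apply, hβ, Submodule.mkQ_apply, Submodule.Quotient.mk_eq_zero]
    exact hx
  have hγβ : γ.hom (β x) = φ ⟨α (β x), hy ▸ hαd y⟩ := by
    simp_rw [← hy]
    exact congr($(hγ).hom y)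
  simp only [LinearMap.comp_apply, LinearMap.add_apply, Submodule.subtype_apply, hγβ, ← map_add]
  congr 1
  ext
  simp

theorem Ideal.exists_smul_eq_of_ext1Vanishes {R M : Type u} [CommRing R] [AddCommGroup M]
    [Module R M] {I : Ideal R} (hExt : Ext1Vanishes R (R ⧸ I) M) (φ : I →ₗ[R] M) :
    ∃ m : M, ∀ a : I, φ a = (a : R) • m := by
  obtain ⟨g, rfl⟩ := LinearMap.exists_extend_of_ext1Vanishes hExt φ
  exact ⟨g 1, fun a => by simp [← map_smul]⟩

theorem LinearPMap.exists_le_mem_domain_of_smul_eq {R E F : Type*} [Ring R] [AddCommGroup E]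
    [Module R E] [AddCommGroup F] [Module R F] (p : E →ₗ.[R] F) {x : E} {m : F}
    (hm : ∀ (r : R) (hr : r • x ∈ p.domain), p ⟨r • x, hr⟩ = r • m) :
    ∃ q : E →ₗ.[R] F, p ≤ q ∧ x ∈ q.domain := by
  have hm₀ (r : R) (hr : r • x = 0) : r • m = 0 := by
    rw [← hm r (hr ▸ p.domain.zero_mem), ← p.map_zero]
    exact congr_arg p (Subtype.ext hr)
  let s := LinearPMap.mkSpanSingleton' (σ := RingHom.id R) x m hm₀
  have hcompat (u : p.domain) (v : s.domain) (huv : (u : E) = v) : p u = s v := by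
    obtain ⟨r, hr⟩ := Submodule.mem_span_singleton.1 v.2
    have hru : r • x ∈ p.domain := hr ▸ huv ▸ u.2
    have hu : u = ⟨r • x, hru⟩ := Subtype.ext (huv.trans hr.symm)
    have hv : v = ⟨r • x, hr ▸ v.2⟩ := Subtype.ext hr.symm
    rw [hu, hv, hm, LinearPMap.mkSpanSingleton'_apply]
    rfl
  refine ⟨p.sup s hcompat, p.left_le_sup s hcompat, ?_⟩
  rw [LinearPMap.domain_sup]
  exact Submodule.mem_sup_right (Submodule.mem_span_singleton_self x)

theorem LinearPMap.exists_smul_eq_of_isLucasModule {R M B : Type u} [CommRing R]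
    [AddCommGroup M] [Module R M] [AddCommGroup B] [Module R B] (hM : IsLucasModule R M)
    (p : B →ₗ.[R] M) {x : B} {I : Ideal R} (hI : I.IsInQ) (hIx : ∀ a ∈ I, a • x ∈ p.domain) :
    ∃ m : M, ∀ (r : R) (hr : r • x ∈ p.domain), p ⟨r • x, hr⟩ = r • m := by
  let φ : I →ₗ[R] M := p.toFun ∘ₗ LinearMap.codRestrict p.domain
    (LinearMap.toSpanSingleton R B x ∘ₗ I.subtype) fun a => hIx a a.2
  obtain ⟨m, hm⟩ := Ideal.exists_smul_eq_of_ext1Vanishes (hM.2 I hI) φ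
  refine ⟨m, fun r hr => sub_eq_zero.1 (hM.1 _ ⟨I, hI, fun a ha => ?_⟩)⟩
  have h₁ : a • p ⟨r • x, hr⟩ = p ⟨r • a • x, p.domain.smul_mem r (hIx a ha)⟩ := by
    rw [← p.map_smul]; congr 1; ext; exact smul_comm a r x
  have h₂ : a • r • m = r • φ ⟨a, ha⟩ := by rw [hm, smul_comm]
  rw [smul_sub, h₁, h₂]
  exact sub_eq_zero.2 (p.map_smul r ⟨a • x, hIx a ha⟩)

/-- If `M` is a Lucas module, `A ≤ B` with `B/A` `𝒬`-torsion, then every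
homomorphism `f : A → M` extends to a homomorphism `g : B → M`. -/
theorem lucas_extension_property (R : Type u) [CommRing R]
    (M : Type u) [AddCommGroup M] [Module R M] (hM : IsLucasModule R M)
    (B : Type u) [AddCommGroup B] [Module R B] (A : Submodule R B)
    (hBA : IsQTorsion R (B ⧸ A)) (f : A →ₗ[R] M) :
    ∃ g : B →ₗ[R] M, ∀ a : A, g (a : B) = f a := by
  obtain ⟨p, hfp, hp⟩ := zorn_le_nonempty_Ici₀ (⟨A, f⟩ : B →ₗ.[R] M)
    (fun c _ hc _ _ => ⟨LinearPMap.sSup c hc.directedOn,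
      fun z hz => LinearPMap.le_sSup hc.directedOn hz⟩) _ le_rfl
  have hdom : p.domain = ⊤ := by
    refine eq_top_iff.2 fun x _ => ?_
    obtain ⟨I, hI, hIx⟩ := hBA (Submodule.Quotient.mk x)
    have hIp (a : R) (ha : a ∈ I) : a • x ∈ p.domain :=
      hfp.1 <| (Submodule.Quotient.mk_eq_zero A).1 (hIx a ha)
    obtain ⟨m, hm⟩ := p.exists_smul_eq_of_isLucasModule hM hI hIp
    obtain ⟨q, hpq, hxq⟩ := p.exists_le_mem_domain_of_smul_eq hm
    exact (hp hpq).1 hxq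
  exact ⟨p.toFun ∘ₗ (LinearEquiv.ofTop _ hdom).symm.toLinearMap,
    fun a => (hfp.2 rfl).symm⟩
end

section
/- Let R be a commutative ring and {M_i}_{i ∈ Λ} a family of R-modules. The direct product ∏_{i ∈ Λ} M_i is a Lucas module if and only if each M_i is a Lucas module. -/
open CategoryTheory

universe u

/-! Torsion-freeness is checked coordinatewise. For `Ext¹`, compute `Ext¹_R(A, -)` as the
degree-one cohomology of `Hom(P, -)` for a projective resolution `P` of `A`: since
`Hom(Pₙ, ∏ Mᵢ) = ∏ Hom(Pₙ, Mᵢ)` compatibly with the differentials, a 1-cocycle with values in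
the product is a coboundary iff each of its coordinates is. -/

open CategoryTheory Limits

namespace ChainComplex

def OneCocyclesAreCoboundaries {C : Type*} [Category C] [HasZeroMorphisms C]
    (K : ChainComplex C ℕ) (Y : C) : Prop :=
  ∀ x : K.X 1 ⟶ Y, K.d 2 1 ≫ x = 0 → ∃ y : K.X 0 ⟶ Y, K.d 1 0 ≫ y = x

lemma exactAt_one_linearYonedaObj_iff {C : Type*} [Category C] [Abelian C]
    (R : Type*) [Ring R] [Linear R C] (K : ChainComplex C ℕ) (Y : C) :
    (K.linearYonedaObj R Y).ExactAt 1 ↔ K.OneCocyclesAreCoboundaries Y := by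
  rw [HomologicalComplex.exactAt_iff' _ 0 1 2 (by simp) (by simp),
    ShortComplex.moduleCat_exact_iff]
  rfl

variable {R : Type u} [Ring R]

lemma oneCocyclesAreCoboundaries_pi_iff (K : ChainComplex (ModuleCat.{u} R) ℕ) {ι : Type u}
    (M : ι → Type u) [∀ i, AddCommGroup (M i)] [∀ i, Module R (M i)] :
    K.OneCocyclesAreCoboundaries (ModuleCat.of R (∀ i, M i)) ↔
      ∀ i, K.OneCocyclesAreCoboundaries (ModuleCat.of R (M i)) := by
  classical
  constructor
  · intro h i x hx
    obtain ⟨y, hy⟩ := h (x ≫ ModuleCat.ofHom (LinearMap.single R M i))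
      (by rw [← Category.assoc, hx, zero_comp])
    refine ⟨y ≫ ModuleCat.ofHom (LinearMap.proj i), ?_⟩
    rw [← Category.assoc, hy]
    ext z
    simp
  · intro h x hx
    choose y hy using fun i => h i (x ≫ ModuleCat.ofHom (LinearMap.proj i))
      (by rw [← Category.assoc, hx, zero_comp])
    refine ⟨ModuleCat.ofHom (LinearMap.pi fun i => (y i).hom), ?_⟩
    ext z i
    exact congrArg (fun φ => φ z) (hy i)

end ChainComplex

variable {R : Type u} [CommRing R]

lemma ext1Vanishes_iff_oneCocyclesAreCoboundaries {A : Type u} [AddCommGroup A] [Module R A]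
    (P : ProjectiveResolution (ModuleCat.of R A)) (B : Type u) [AddCommGroup B] [Module R B] :
    Ext1Vanishes R A B ↔ P.complex.OneCocyclesAreCoboundaries (ModuleCat.of R B) := by
  rw [Ext1Vanishes, ← ModuleCat.isZero_iff_subsingleton,
    (P.isoExt 1 (ModuleCat.of R B)).isZero_iff,
    ← HomologicalComplex.exactAt_iff_isZero_homology,
    ChainComplex.exactAt_one_linearYonedaObj_iff]

lemma ext1Vanishes_pi_iff (A : Type u) [AddCommGroup A] [Module R A] {ι : Type u}
    (M : ι → Type u) [∀ i, AddCommGroup (M i)] [∀ i, Module R (M i)] :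
    Ext1Vanishes R A (∀ i, M i) ↔ ∀ i, Ext1Vanishes R A (M i) := by
  let P : ProjectiveResolution (ModuleCat.of R A) := HasProjectiveResolution.out.some
  simp only [ext1Vanishes_iff_oneCocyclesAreCoboundaries P,
    ChainComplex.oneCocyclesAreCoboundaries_pi_iff]

lemma isQTorsionFree_pi_iff {ι : Type u} (M : ι → Type u) [∀ i, AddCommGroup (M i)]
    [∀ i, Module R (M i)] :
    IsQTorsionFree R (∀ i, M i) ↔ ∀ i, IsQTorsionFree R (M i) := by
  classical
  constructor
  · rintro h i x ⟨I, hI, hann⟩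
    have hsingle : (Pi.single i x : ∀ j, M j) = 0 :=
      h _ ⟨I, hI, fun a ha => by rw [← Pi.single_smul, hann a ha, Pi.single_zero]⟩
    simpa using congrFun hsingle i
  · rintro h x ⟨I, hI, hann⟩
    funext i
    exact h i (x i) ⟨I, hI, fun a ha => congrFun (hann a ha) i⟩

/-- A direct product `∏ᵢ Mᵢ` is a Lucas module iff each `Mᵢ` is a Lucas module. -/
theorem prod_lucas_iff (R : Type u) [CommRing R] (ι : Type u)
    (M : ι → Type u) [∀ i, AddCommGroup (M i)] [∀ i, Module R (M i)] :
    IsLucasModule R (∀ i, M i) ↔ ∀ i, IsLucasModule R (M i) := by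
  simp only [IsLucasModule, isQTorsionFree_pi_iff, ext1Vanishes_pi_iff]
  exact ⟨fun ⟨htf, hext⟩ i => ⟨htf i, fun I hI => hext I hI i⟩,
    fun h => ⟨fun i => (h i).1, fun I hI i => (h i).2 I hI⟩⟩
end

section
/- Let R be a commutative ring, M a Lucas R-module, and N a pure submodule of M. Then N is a Lucas module. -/
/-!
Torsion-freeness passes to submodules. For the Ext condition, let `I ∈ 𝒬` be generated by
`a₁, …, aₙ` and let `y ∈ M` with `I • y ⊆ N`. The system `aᵢ • X = aᵢ • y`, whose right-hand sides
lie in `N`, is solved by `y` in `M`; tensoring the presentation `R → Rⁿ → Rⁿ ⧸ R (a₁, …, aₙ) → 0`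
with `N ⊆ M` shows that purity transfers the solution to some `x ∈ N`. Then `I • (y - x) = 0`, so
`y = x ∈ N` by torsion-freeness. Consequently, if a 1-cocycle `P₁ → N` on a projective resolution
of `R ⧸ I` is the coboundary of `g : P₀ → M`, then `g` takes values in `N`, since `I • P₀` lies in
the image of `P₁`.
-/

open CategoryTheory

universe u

/-- A submodule `N` of `M` is pure if for every `R`-module `L`, the natural map
`N ⊗ L → M ⊗ L` is injective. -/
def Submodule.IsPureSubmodule {R : Type u} [CommRing R] {M : Type u} [AddCommGroup M]
    [Module R M] (N : Submodule R M) : Prop :=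
  ∀ (L : Type u) [AddCommGroup L] [Module R L],
    Function.Injective (LinearMap.rTensor L N.subtype)

open TensorProduct

section

variable {R M : Type u} [CommRing R] [AddCommGroup M] [Module R M]

theorem IsQTorsionFree.submodule (hM : IsQTorsionFree R M) (N : Submodule R M) :
    IsQTorsionFree R N := by
  rintro x ⟨I, hI, hx⟩
  exact Subtype.ext <| hM x ⟨I, hI, fun a ha => congrArg Subtype.val (hx a ha)⟩

theorem TensorProduct.piScalarRight_rTensor {N P : Type*} [AddCommGroup N] [Module R N]
    [AddCommGroup P] [Module R P] {ι : Type*} [Fintype ι] [DecidableEq ι] (g : N →ₗ[R] P)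
    (s : N ⊗[R] (ι → R)) :
    piScalarRight R R P ι (g.rTensor (ι → R) s) = g ∘ piScalarRight R R N ι s := by
  induction s using TensorProduct.induction_on with
  | zero => ext; simp
  | tmul x f => ext; simp
  | add s t hs ht => ext i; simp_all [funext_iff]

theorem Submodule.IsPureSubmodule.exists_smul_eq {N : Submodule R M} (hN : N.IsPureSubmodule)
    (S : Finset R) {y : M} (hy : ∀ a ∈ S, a • y ∈ N) : ∃ x ∈ N, ∀ a ∈ S, a • x = a • y := by
  classical
  set f := LinearMap.toSpanSingleton R (S → R) (↑)
  set s := (piScalarRight R R N S).symm fun a => ⟨(a : R) • y, hy a a.2⟩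
  have hs : N.subtype.rTensor (S → R) s = y ⊗ₜ (↑) := by
    apply (piScalarRight R R M S).injective
    ext a
    rw [piScalarRight_rTensor]
    simp [s]
  -- In `M ⊗ L` the element `s` becomes `y ⊗ [v] = 0`, where `v = f 1`; purity pulls this back to
  -- `N ⊗ L`, and right exactness then writes `s = x ⊗ v` with `x ∈ N`.
  have hs_quot : (LinearMap.range f).mkQ.lTensor N s = 0 := by
    apply hN ((S → R) ⧸ LinearMap.range f)
    rw [map_zero, ← LinearMap.comp_apply, LinearMap.rTensor_comp_lTensor,
      ← LinearMap.lTensor_comp_rTensor, LinearMap.comp_apply, hs, LinearMap.lTensor_tmul,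
      show ((↑) : S → R) = f 1 by simp [f], ← LinearMap.comp_apply, LinearMap.range_mkQ_comp,
      LinearMap.zero_apply, tmul_zero]
  obtain ⟨u, hu⟩ := (lTensor_exact N (LinearMap.exact_map_mkQ_range f)
    (Submodule.mkQ_surjective _) s).mp hs_quot
  refine ⟨TensorProduct.rid R N u, (TensorProduct.rid R N u).2, fun a ha => ?_⟩
  have hu' : f.lTensor N u = TensorProduct.rid R N u ⊗ₜ (↑) := by
    rw [← (TensorProduct.rid R N).symm_apply_apply u, TensorProduct.rid_symm_apply,
      LinearMap.lTensor_tmul]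
    simp [f]
  have := congrFun (congrArg (piScalarRight R R N S) (hu.symm.trans hu')) ⟨a, ha⟩
  simpa [s] using congrArg Subtype.val this.symm

theorem Submodule.IsPureSubmodule.mem_of_smul_mem (hM : IsQTorsionFree R M)
    {N : Submodule R M} (hN : N.IsPureSubmodule) {I : Ideal R} (hI : I.IsInQ) {y : M}
    (hy : ∀ a ∈ I, a • y ∈ N) : y ∈ N := by
  obtain ⟨S, hS⟩ := hI.1
  obtain ⟨x, hxN, hx⟩ := hN.exists_smul_eq S fun a ha => hy a (hS ▸ Ideal.subset_span ha)
  have hI_ann : I ≤ LinearMap.ker (LinearMap.toSpanSingleton R M (y - x)) := by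
    rw [← hS, Ideal.span_le]
    intro a ha
    simp [smul_sub, hx a ha]
  have hyx : y - x = 0 := hM _ ⟨I, hI, fun a ha => hI_ann ha⟩
  rwa [sub_eq_zero.mp hyx]

theorem ext1Vanishes_iff_of_projectiveResolution_s6 (A B : Type u) [AddCommGroup A] [Module R A]
    [AddCommGroup B] [Module R B] (P : ProjectiveResolution (ModuleCat.of R A)) :
    Ext1Vanishes R A B ↔
      ∀ f : P.complex.X 1 ⟶ ModuleCat.of R B, P.complex.d 2 1 ≫ f = 0 →
        ∃ g : P.complex.X 0 ⟶ ModuleCat.of R B, P.complex.d 1 0 ≫ g = f := by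
  rw [Ext1Vanishes, ← ModuleCat.isZero_iff_subsingleton,
    (P.isoExt 1 (ModuleCat.of R B)).isZero_iff,
    ← HomologicalComplex.exactAt_iff_isZero_homology,
    HomologicalComplex.exactAt_iff' _ 0 1 2 (by simp) (by simp),
    ShortComplex.moduleCat_exact_iff]
  rfl

theorem Ext1Vanishes.submodule {I : Ideal R} (hM : Ext1Vanishes R (R ⧸ I) M)
    {N : Submodule R M} (hN : ∀ y : M, (∀ a ∈ I, a • y ∈ N) → y ∈ N) :
    Ext1Vanishes R (R ⧸ I) N := by
  obtain ⟨P⟩ := HasProjectiveResolution.out (Z := ModuleCat.of R (R ⧸ I))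
  rw [ext1Vanishes_iff_of_projectiveResolution_s6 _ _ P] at hM ⊢
  intro f hf
  obtain ⟨g, hg⟩ := hM (f ≫ ModuleCat.ofHom N.subtype) (by rw [← Category.assoc, hf,
    Limits.zero_comp])
  have hg_mem (p : P.complex.X 0) : g p ∈ N := hN _ fun a ha => by
    obtain ⟨q, hq⟩ : a • p ∈ LinearMap.range (P.complex.d 1 0).hom := by
      rw [P.exact₀.moduleCat_range_eq_ker, LinearMap.mem_ker, map_smul]
      have ha_ann (q : R ⧸ I) : a • q = 0 := by
        rw [Algebra.smul_def, Ideal.Quotient.algebraMap_eq,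
          Ideal.Quotient.eq_zero_iff_mem.mpr ha, zero_mul]
      exact ha_ann _
    rw [← map_smul, ← hq, ← ModuleCat.comp_apply, hg]
    exact (f q).2
  exact ⟨ModuleCat.ofHom (g.hom.codRestrict N hg_mem), by ext x; exact congr($hg x)⟩

end

/-- A pure submodule of a Lucas module is a Lucas module. -/
theorem pure_submodule_lucas (R : Type u) [CommRing R]
    (M : Type u) [AddCommGroup M] [Module R M] (hM : IsLucasModule R M)
    (N : Submodule R M) (hN : N.IsPureSubmodule) :
    IsLucasModule R N :=
  ⟨hM.1.submodule N, fun I hI => (hM.2 I hI).submodule fun _ => hN.mem_of_smul_mem hM.1 hI⟩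
end

section
/- Let R be a commutative ring and {M_i, φ_{i,j} | i, j ∈ Γ} an inverse system of Lucas R-modules. Then the inverse limit lim← M_i is a Lucas module. -/
/-!
Since `R` is projective, `Ext¹_R(R/I, M)` vanishes exactly when every `R`-linear map `I → M` is
multiplication by some element of `M`; this is read off a free resolution of `R/I` that starts
with `R`. Given `g : I → lim M_i`, each component `I → M_i` is then multiplication by some `m_i`,
and `𝒬`-torsion-freeness of `M_i` forces `φ_{i,j}(m_j) = m_i`, because both are multiplied by
every `a ∈ I` to the same element. So `(m_i)` lies in the limit and `g` is multiplication by it.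
Torsion-freeness itself passes to submodules of products.
-/

open CategoryTheory

universe u

open Limits

namespace CategoryTheory

variable {R : Type*} [Ring R] {C : Type*} [Category* C] [Abelian C] [Linear R C]
  [EnoughProjectives C]

lemma ProjectiveResolution.isZero_ext_one_iff {X : C} (P : ProjectiveResolution X) (Y : C) :
    IsZero (((Ext R C 1).obj (Opposite.op X)).obj Y) ↔
      ∀ f : P.complex.X 1 ⟶ Y, P.complex.d 2 1 ≫ f = 0 →
        ∃ g : P.complex.X 0 ⟶ Y, P.complex.d 1 0 ≫ g = f := by
  rw [(P.isoExt 1 Y).isZero_iff, ← HomologicalComplex.exactAt_iff_isZero_homology,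
    HomologicalComplex.exactAt_iff' _ 0 1 2 (by simp) (by simp), ShortComplex.moduleCat_exact_iff]
  rfl

end CategoryTheory

namespace LinearMap

variable {R : Type*} [Ring R] {P N M : Type*} [AddCommGroup P] [Module R P] [AddCommGroup N]
  [Module R N] [AddCommGroup M] [Module R M]

lemma exists_comp_eq_of_ker_le {π : P →ₗ[R] N} (hπ : Function.Surjective π) {f : P →ₗ[R] M}
    (h : ker π ≤ ker f) : ∃ g : N →ₗ[R] M, g ∘ₗ π = f :=
  ⟨(ker π).liftQ f h ∘ₗ (π.quotKerEquivOfSurjective hπ).symm.toLinearMap, by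
    ext x
    simp⟩

end LinearMap

namespace ModuleCat

section Syzygy

variable {R : Type u} [Ring R]

noncomputable def freeCover {X : ModuleCat.{u} R} (K : Submodule R X) :
    of R (K →₀ R) ⟶ X :=
  ofHom (K.subtype ∘ₗ Finsupp.linearCombination R id)

lemma range_freeCover {X : ModuleCat.{u} R} (K : Submodule R X) :
    LinearMap.range (freeCover K).hom = K := by
  rw [freeCover, hom_ofHom, LinearMap.range_comp,
    LinearMap.range_eq_top.2 (Finsupp.linearCombination_id_surjective R K), Submodule.map_top,
    Submodule.range_subtype]

variable {A : Type u} [AddCommGroup A] [Module R A] (K : Submodule R A)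

-- `(syzygyMap K n).2.1` is the degree-`n` term of the resolution of `A ⧸ K`, and
-- `(syzygyMap K n).2.2` the differential into it, a free cover of the previous kernel.
noncomputable def syzygyMap : ℕ → Σ X Y : ModuleCat.{u} R, X ⟶ Y
  | 0 => ⟨_, _, freeCover (X := of R A) K⟩
  | n + 1 => ⟨_, _, freeCover (LinearMap.ker (syzygyMap n).2.2.hom)⟩

lemma range_syzygyMap_zero : LinearMap.range (syzygyMap K 0).2.2.hom = K :=
  range_freeCover (X := of R A) K

lemma range_syzygyMap_succ (n : ℕ) :
    LinearMap.range (syzygyMap K (n + 1)).2.2.hom = LinearMap.ker (syzygyMap K n).2.2.hom :=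
  range_freeCover _

noncomputable def syzygyComplex : ChainComplex (ModuleCat.{u} R) ℕ :=
  ChainComplex.of (fun n => (syzygyMap K n).2.1) (fun n => (syzygyMap K n).2.2) fun n => by
    ext x
    exact (range_syzygyMap_succ K n).le ⟨x, rfl⟩

lemma syzygyComplex_d (n : ℕ) : (syzygyComplex K).d (n + 1) n = (syzygyMap K n).2.2 :=
  ChainComplex.of_d (fun n => (syzygyMap K n).2.1) (fun n => (syzygyMap K n).2.2) n

lemma syzygyComplex_exactAt_succ (n : ℕ) : (syzygyComplex K).ExactAt (n + 1) := by
  rw [HomologicalComplex.exactAt_iff' _ (n + 2) (n + 1) n (by simp) (by simp),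
    ShortComplex.moduleCat_exact_iff]
  intro x hx
  change (syzygyComplex K).d (n + 1) n x = 0 at hx
  rw [syzygyComplex_d] at hx
  obtain ⟨y, hy⟩ := (range_syzygyMap_succ K n).ge hx
  refine ⟨y, ?_⟩
  change (syzygyComplex K).d (n + 2) (n + 1) y = x
  rw [syzygyComplex_d]
  exact hy

noncomputable def syzygyAugmentation :
    syzygyComplex K ⟶ (ChainComplex.single₀ (ModuleCat.{u} R)).obj (of R (A ⧸ K)) :=
  (ChainComplex.toSingle₀Equiv _ _).symm ⟨ofHom K.mkQ, by
    ext x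
    change K.mkQ ((syzygyComplex K).d 1 0 x) = 0
    rw [syzygyComplex_d]
    exact (Submodule.Quotient.mk_eq_zero K).2 ((range_syzygyMap_zero K).le ⟨x, rfl⟩)⟩

lemma syzygyAugmentation_f_zero : (syzygyAugmentation K).f 0 = ofHom K.mkQ :=
  ChainComplex.toSingle₀Equiv_symm_apply_f_zero _ _

noncomputable def syzygyResolution [Module.Projective R A] :
    ProjectiveResolution (of R (A ⧸ K)) where
  complex := syzygyComplex K
  projective n := by
    rcases n with _ | _ | n
    · exact (inferInstance : Projective (of R A))
    all_goals exact (inferInstance : Projective (of R (_ →₀ R)))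
  π := syzygyAugmentation K
  quasiIso := ⟨fun n => by
    rcases n with _ | n
    · rw [ChainComplex.quasiIsoAt₀_iff, ShortComplex.quasiIso_iff_of_zeros']
      · refine ⟨?_, ?_⟩
        · rw [ShortComplex.moduleCat_exact_iff]
          intro x hx
          replace hx : (syzygyAugmentation K).f 0 x = 0 := hx
          rw [syzygyAugmentation_f_zero] at hx
          obtain ⟨y, hy⟩ := (range_syzygyMap_zero K).ge ((Submodule.Quotient.mk_eq_zero K).1 hx)
          refine ⟨y, ?_⟩
          change (syzygyComplex K).d 1 0 y = x
          rw [syzygyComplex_d]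
          exact hy
        · change Epi ((syzygyAugmentation K).f 0)
          rw [syzygyAugmentation_f_zero]
          exact (epi_iff_surjective _).2 K.mkQ_surjective
      all_goals rfl
    · rw [quasiIsoAt_iff_exactAt' _ _ (ChainComplex.exactAt_succ_single_obj _ _)]
      exact syzygyComplex_exactAt_succ K n⟩

end Syzygy

section Ext

variable {R : Type u} [CommRing R] {A : Type u} [AddCommGroup A] [Module R A]
  [Module.Projective R A] (K : Submodule R A) (M : Type u) [AddCommGroup M] [Module R M]

lemma isZero_ext_one_quotient_iff :
    IsZero (((Ext R (ModuleCat.{u} R) 1).obj (Opposite.op (of R (A ⧸ K)))).obj (of R M)) ↔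
      ∀ g : K →ₗ[R] M, ∃ h : A →ₗ[R] M, h ∘ₗ K.subtype = g := by
  have hπ := Finsupp.linearCombination_id_surjective R K
  have hker : LinearMap.range ((syzygyResolution K).complex.d 2 1).hom =
      LinearMap.ker (Finsupp.linearCombination R (id : K → K)) :=
    (range_syzygyMap_succ K 0).trans (LinearMap.ker_comp_of_ker_eq_bot _ K.ker_subtype)
  rw [(syzygyResolution K).isZero_ext_one_iff]
  constructor
  · intro H g
    obtain ⟨h, hh⟩ := H (ofHom (g ∘ₗ Finsupp.linearCombination R id)) (by
      ext x
      have hx : Finsupp.linearCombination R id ((syzygyResolution K).complex.d 2 1 x) = 0 :=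
        hker.le ⟨x, rfl⟩
      exact (congrArg g hx).trans (map_zero g))
    exact ⟨h.hom, (LinearMap.cancel_right hπ).1 (congrArg Hom.hom hh)⟩
  · intro H f hf
    have hf' : LinearMap.ker (Finsupp.linearCombination R (id : K → K)) ≤ LinearMap.ker f.hom := by
      intro z hz
      obtain ⟨y, rfl⟩ := hker.ge hz
      exact congrArg (fun φ => φ.hom y) hf
    obtain ⟨g, hg⟩ := LinearMap.exists_comp_eq_of_ker_le hπ hf'
    obtain ⟨h, rfl⟩ := H g
    exact ⟨ofHom h, hom_ext hg⟩

end Ext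

end ModuleCat

section Lucas

variable {R : Type u} [CommRing R]

lemma ext1Vanishes_quotient_iff_s7 (I : Ideal R) (M : Type u) [AddCommGroup M] [Module R M] :
    Ext1Vanishes R (R ⧸ I) M ↔ ∀ g : I →ₗ[R] M, ∃ m : M, ∀ x : I, g x = (x : R) • m := by
  rw [Ext1Vanishes, ← ModuleCat.isZero_iff_subsingleton, ModuleCat.isZero_ext_one_quotient_iff]
  refine forall_congr' fun g => ⟨fun ⟨h, hh⟩ => ⟨h 1, fun x => ?_⟩, fun ⟨m, hm⟩ =>
    ⟨LinearMap.toSpanSingleton R M m, LinearMap.ext fun x => (hm x).symm⟩⟩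
  rw [← hh, LinearMap.comp_apply, Submodule.subtype_apply, ← h.map_smul, smul_eq_mul, mul_one]

variable {M N : Type u} [AddCommGroup M] [Module R M] [AddCommGroup N] [Module R N]

lemma IsQTorsionFree.of_injective (hM : IsQTorsionFree R M) (f : N →ₗ[R] M)
    (hf : Function.Injective f) : IsQTorsionFree R N := by
  rintro x ⟨I, hI, hx⟩
  refine hf ((hM (f x) ⟨I, hI, fun a ha => ?_⟩).trans (map_zero f).symm)
  rw [← map_smul, hx a ha, map_zero]

lemma IsQTorsionFree.pi {ι : Type u} {M : ι → Type u} [∀ i, AddCommGroup (M i)]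
    [∀ i, Module R (M i)] (hM : ∀ i, IsQTorsionFree R (M i)) : IsQTorsionFree R (∀ i, M i) := by
  rintro x ⟨I, hI, hx⟩
  funext i
  exact hM i (x i) ⟨I, hI, fun a ha => congrFun (hx a ha) i⟩

lemma IsQTorsionFree.eq_of_forall_smul_eq (hM : IsQTorsionFree R M) {I : Ideal R}
    (hI : I.IsInQ) {m m' : M} (h : ∀ a ∈ I, a • m = a • m') : m = m' :=
  sub_eq_zero.1 (hM _ ⟨I, hI, fun a ha => by rw [smul_sub, h a ha, sub_self]⟩)

end Lucas

theorem inverse_limit_lucas_general (R : Type u) [CommRing R] (Γ : Type u) [Preorder Γ]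
    (M : Γ → Type u) [∀ i, AddCommGroup (M i)] [∀ i, Module R (M i)]
    (φ : ∀ i j : Γ, i ≤ j → (M j →ₗ[R] M i))
    (hLucas : ∀ i, IsLucasModule R (M i))
    (L : Submodule R (∀ i, M i))
    (hL : ∀ f : ∀ i, M i, f ∈ L ↔ ∀ (i j : Γ) (h : i ≤ j), φ i j h (f j) = f i) :
    IsLucasModule R L := by
  refine ⟨(IsQTorsionFree.pi fun i => (hLucas i).1).of_injective L.subtype L.injective_subtype,
    fun I hI => (ext1Vanishes_quotient_iff_s7 I L).2 fun g => ?_⟩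
  choose m hm using fun i => (ext1Vanishes_quotient_iff_s7 I (M i)).1 ((hLucas i).2 I hI)
    (LinearMap.proj i ∘ₗ L.subtype ∘ₗ g)
  have hcompat : ∀ (i j : Γ) (h : i ≤ j), φ i j h (m j) = m i := fun i j h =>
    (hLucas i).1.eq_of_forall_smul_eq hI fun a ha => by
      rw [← map_smul, ← hm j ⟨a, ha⟩, ← hm i ⟨a, ha⟩]
      exact (hL _).1 (g ⟨a, ha⟩).2 i j h
  exact ⟨⟨m, (hL m).2 hcompat⟩, fun x => Subtype.ext (funext fun i => hm i x)⟩

/-- The inverse limit of an inverse system of Lucas modules (the submodule of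
the product consisting of compatible families) is a Lucas module. -/
theorem inverse_limit_lucas (R : Type u) [CommRing R] (Γ : Type u) [Preorder Γ]
    (M : Γ → Type u) [∀ i, AddCommGroup (M i)] [∀ i, Module R (M i)]
    (φ : ∀ i j : Γ, i ≤ j → (M j →ₗ[R] M i))
    (hid : ∀ i : Γ, φ i i le_rfl = LinearMap.id)
    (hcomp : ∀ (i j k : Γ) (hij : i ≤ j) (hjk : j ≤ k),
      (φ i j hij).comp (φ j k hjk) = φ i k (hij.trans hjk))
    (hLucas : ∀ i, IsLucasModule R (M i))
    (L : Submodule R (∀ i, M i))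
    (hL : ∀ f : ∀ i, M i, f ∈ L ↔ ∀ (i j : Γ) (h : i ≤ j), φ i j h (f j) = f i) :
    IsLucasModule R L :=
  inverse_limit_lucas_general R Γ M φ hLucas L hL
end

section
/- Let R be a commutative ring, M an R-module, T = tor_𝒬(M) its 𝒬-torsion submodule, and L a Lucas R-module containing M/T as an essential submodule such that L/(M/T) is 𝒬-torsion. Then the composite φ : M ↠ M/T ↪ L is an ℒ-envelope of M with the unique mapping property, where ℒ is the class of all Lucas R-modules. -/
open CategoryTheory

universe u

/-
Via a projective resolution `P → R/I`, the vanishing of `Ext¹(R/I, B)` says that every map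
`ker (P₀ → R/I) → B` extends to `P₀`; comparing `P₀ → R/I` with `R → R/I` turns this into:
every `R`-linear map `I → B` is multiplication by an element of `B`. For a Lucas module `F` and
`I ∈ 𝒬` with `I x` inside the domain of a partial map into `F`, that element is a consistent value
at `x` (by `𝒬`-torsion-freeness), so by Zorn's lemma maps `N → F` extend to `L` whenever `L/N` is
`𝒬`-torsion, and uniquely so. The composite `φ : M → L` has `𝒬`-torsion kernel `T` and
`𝒬`-torsion cokernel, so every map from `M` to a Lucas module factors uniquely through `φ`;
uniqueness for `F = L` forces an endomorphism `h` with `h ∘ φ = φ` to be the identity.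
-/

universe v

namespace CategoryTheory.ProjectiveResolution

theorem exists_d_comp_eq_of_subsingleton_ext {R : Type*} [Ring R] {C : Type*} [Category C]
    [Abelian C] [Linear R C] [EnoughProjectives C] {X Y : C} (P : ProjectiveResolution X)
    [Subsingleton (((Ext R C 1).obj (Opposite.op X)).obj Y)]
    (φ : P.complex.X 1 ⟶ Y) (hφ : P.complex.d 2 1 ≫ φ = 0) :
    ∃ ψ : P.complex.X 0 ⟶ Y, P.complex.d 1 0 ≫ ψ = φ := by
  have : Subsingleton ((P.complex.linearYonedaObj R Y).homology 1) :=
    ((P.isoExt 1 Y).symm.toLinearEquiv.toEquiv).subsingleton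
  have hexact : (P.complex.linearYonedaObj R Y).ExactAt 1 := by
    rw [HomologicalComplex.exactAt_iff_isZero_homology]
    exact ModuleCat.isZero_of_subsingleton _
  exact (ShortComplex.moduleCat_exact_iff _).1
    ((HomologicalComplex.exactAt_iff' _ 0 1 2 (by simp) (by simp)).1 hexact) φ hφ

theorem exists_extension_from_ker_π {R : Type u} [CommRing R] [Small.{v} R]
    {X Y : ModuleCat.{v} R} (P : ProjectiveResolution X)
    [Subsingleton (((Ext R (ModuleCat.{v} R) 1).obj (Opposite.op X)).obj Y)]
    (h : LinearMap.ker (P.π.f 0).hom →ₗ[R] Y) :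
    ∃ ψ : P.complex.X 0 →ₗ[R] Y, ∀ z : LinearMap.ker (P.π.f 0).hom, ψ z = h z := by
  have hd : ∀ u, P.complex.d 1 0 u ∈ LinearMap.ker (P.π.f 0).hom := fun u => by
    rw [LinearMap.mem_ker, ← ModuleCat.comp_apply, P.complex_d_comp_π_f_zero]; rfl
  obtain ⟨ψ, hψ⟩ := P.exists_d_comp_eq_of_subsingleton_ext (R := R)
    (ModuleCat.ofHom (h ∘ₗ (P.complex.d 1 0).hom.codRestrict _ hd)) (by
      ext u
      have hdd : P.complex.d 1 0 (P.complex.d 2 1 u) = 0 := by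
        rw [← ModuleCat.comp_apply, P.complex.d_comp_d]; rfl
      change h ⟨_, hd (P.complex.d 2 1 u)⟩ = 0
      rw [show (⟨_, hd _⟩ : LinearMap.ker (P.π.f 0).hom) = 0 from Subtype.ext hdd, map_zero])
  refine ⟨ψ.hom, fun z => ?_⟩
  obtain ⟨z, hz⟩ := z
  obtain ⟨u, rfl⟩ := (ShortComplex.moduleCat_exact_iff _).1 P.exact₀ z hz
  exact congr($hψ u)

end CategoryTheory.ProjectiveResolution

theorem Ext1Vanishes.exists_smul_eq {R : Type u} [CommRing R] {I : Ideal R} {B : Type u}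
    [AddCommGroup B] [Module R B] (hE : Ext1Vanishes R (R ⧸ I) B) (g : I →ₗ[R] B) :
    ∃ y : B, ∀ a : I, g a = (a : R) • y := by
  have : Subsingleton _ := hE
  obtain ⟨P⟩ := HasProjectiveResolution.out (Z := ModuleCat.of R (R ⧸ I))
  obtain ⟨α, hα⟩ := Module.projective_lifting_property I.mkQ (P.π.f 0).hom I.mkQ_surjective
  have hker : ∀ z, z ∈ LinearMap.ker (P.π.f 0).hom ↔ α z ∈ I := fun z => by
    rw [LinearMap.mem_ker, ← hα]
    exact Submodule.Quotient.mk_eq_zero I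
  obtain ⟨ψ, hψ⟩ := P.exists_extension_from_ker_π (Y := ModuleCat.of R B)
    (g ∘ₗ α.restrict fun z => (hker z).1)
  obtain ⟨p, hp⟩ := ((ModuleCat.epi_iff_surjective (P.π.f 0)).1 inferInstance) (I.mkQ 1)
  have hc : α p - 1 ∈ I := by
    rw [← Submodule.Quotient.mk_eq_zero, Submodule.Quotient.mk_sub, ← I.mkQ_apply,
      ← I.mkQ_apply, ← LinearMap.comp_apply, hα]
    exact sub_eq_zero.2 hp
  refine ⟨ψ p - g ⟨_, hc⟩, fun a => ?_⟩
  have hap : α ((a : R) • p) ∈ I := by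
    simpa [mul_sub] using I.add_mem a.2 (I.mul_mem_left (a : R) hc)
  have hsplit : (⟨α ((a : R) • p), hap⟩ : I) = a + (a : R) • ⟨_, hc⟩ := by
    ext; simp [mul_sub]
  calc g a = g ⟨α ((a : R) • p), hap⟩ - (a : R) • g ⟨_, hc⟩ := by
        rw [hsplit, map_add, map_smul, add_sub_cancel_right]
    _ = ψ ((a : R) • p) - (a : R) • g ⟨_, hc⟩ := by
        rw [hψ ⟨_, (hker _).2 hap⟩]; rfl
    _ = (a : R) • (ψ p - g ⟨_, hc⟩) := by rw [map_smul, smul_sub]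

theorem LinearPMap.exists_ge_mem_domain_of_smul_eq {R E F : Type*} [Ring R] [AddCommGroup E]
    [Module R E] [AddCommGroup F] [Module R F] (m : E →ₗ.[R] F) (x : E) (y : F)
    (hy : ∀ (c : R) (hc : c • x ∈ m.domain), m ⟨c • x, hc⟩ = c • y) :
    ∃ m' ≥ m, x ∈ m'.domain := by
  have hann : ∀ c : R, c • x = 0 → c • y = 0 := fun c hc => by
    have hc' : c • x ∈ m.domain := hc ▸ m.domain.zero_mem
    rw [← hy c hc', show (⟨c • x, hc'⟩ : m.domain) = 0 from Subtype.ext hc, m.map_zero]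
  set q : E →ₗ.[R] F := mkSpanSingleton' x y hann
  have hcompat : ∀ (u : m.domain) (v : q.domain), (u : E) = v → m u = q v := by
    rintro ⟨u, hu⟩ ⟨v, hv⟩ (rfl : u = v)
    obtain ⟨c, rfl⟩ := Submodule.mem_span_singleton.1 (show u ∈ R ∙ x from hv)
    rw [hy c hu]
    exact (mkSpanSingleton'_apply x y hann c hv).symm
  refine ⟨m.sup _ hcompat, m.left_le_sup _ hcompat, ?_⟩
  rw [domain_sup]
  exact Submodule.mem_sup_right (Submodule.mem_span_singleton_self x)

section Lucas

variable {R : Type u} [CommRing R] {L F : Type u} [AddCommGroup L] [Module R L]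
  [AddCommGroup F] [Module R F]

theorem IsQTorsion.exists_smul_mem {N : Submodule R L} (htor : IsQTorsion R (L ⧸ N)) (x : L) :
    ∃ I : Ideal R, I.IsInQ ∧ ∀ a ∈ I, a • x ∈ N := by
  obtain ⟨I, hI, hIx⟩ := htor (N.mkQ x)
  exact ⟨I, hI, fun a ha => (Submodule.Quotient.mk_eq_zero N).1 (hIx a ha)⟩

theorem IsQTorsionFree.linearMap_ext {N : Submodule R L} (hF : IsQTorsionFree R F)
    (htor : IsQTorsion R (L ⧸ N)) {g₁ g₂ : L →ₗ[R] F} (h : ∀ z ∈ N, g₁ z = g₂ z) : g₁ = g₂ := by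
  ext x
  obtain ⟨I, hI, hIx⟩ := htor.exists_smul_mem x
  refine sub_eq_zero.1 (hF _ ⟨I, hI, fun a ha => ?_⟩)
  rw [smul_sub, ← map_smul, ← map_smul, h _ (hIx a ha), sub_self]

theorem IsLucasModule.exists_smul_eq_of_smul_mem_domain (hF : IsLucasModule R F)
    (m : L →ₗ.[R] F) {x : L} {I : Ideal R} (hI : I.IsInQ) (hIx : ∀ a ∈ I, a • x ∈ m.domain) :
    ∃ y : F, ∀ (c : R) (hc : c • x ∈ m.domain), m ⟨c • x, hc⟩ = c • y := by
  obtain ⟨y, hy⟩ := (hF.2 I hI).exists_smul_eq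
    (m.toFun ∘ₗ ((LinearMap.toSpanSingleton R L x).restrict fun a ha => hIx a ha))
  refine ⟨y, fun c hc => sub_eq_zero.1 (hF.1 _ ⟨I, hI, fun a ha => ?_⟩)⟩
  have hay : a • y = m ⟨a • x, hIx a ha⟩ := (hy ⟨a, ha⟩).symm
  rw [smul_sub, ← m.map_smul, smul_comm a c y, hay, ← m.map_smul, sub_eq_zero]
  congr 1
  exact Subtype.ext (smul_comm a c x)

theorem IsLucasModule.exists_extension (hF : IsLucasModule R F) {N : Submodule R L}
    (htor : IsQTorsion R (L ⧸ N)) (f : N →ₗ[R] F) : ∃ g : L →ₗ[R] F, g ∘ₗ N.subtype = f := by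
  obtain ⟨m, hfm, hm⟩ := zorn_le_nonempty₀ {p : L →ₗ.[R] F | ⟨N, f⟩ ≤ p}
    (fun c hcs hchain p hp => ⟨LinearPMap.sSup c hchain.directedOn,
      (hcs hp).trans (LinearPMap.le_sSup _ hp), fun _ => LinearPMap.le_sSup _⟩) _
    (le_refl (⟨N, f⟩ : L →ₗ.[R] F))
  have htop : m.domain = ⊤ := by
    refine eq_top_iff.2 fun x _ => ?_
    obtain ⟨I, hI, hIx⟩ := htor.exists_smul_mem x
    obtain ⟨y, hy⟩ := hF.exists_smul_eq_of_smul_mem_domain m hI fun a ha => hfm.1 (hIx a ha)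
    obtain ⟨m', hmm', hx⟩ := m.exists_ge_mem_domain_of_smul_eq x y hy
    exact (hm.2 (hfm.trans hmm') hmm').1 hx
  refine ⟨m.toFun ∘ₗ (LinearEquiv.ofTop _ htop).symm.toLinearMap, LinearMap.ext fun x => ?_⟩
  exact (hfm.2 rfl).symm

theorem IsLucasModule.existsUnique_comp_eq {M : Type u} [AddCommGroup M] [Module R M]
    (hF : IsLucasModule R F) (φ : M →ₗ[R] L) (hker : IsQTorsion R (LinearMap.ker φ))
    (htor : IsQTorsion R (L ⧸ LinearMap.range φ)) (f : M →ₗ[R] F) :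
    ∃! g : L →ₗ[R] F, g ∘ₗ φ = f := by
  have hkill : LinearMap.ker φ ≤ LinearMap.ker f := fun x hx => by
    obtain ⟨I, hI, hIx⟩ := hker ⟨x, hx⟩
    exact hF.1 _ ⟨I, hI, fun a ha => by
      rw [← map_smul]; exact congr(f $(congrArg Subtype.val (hIx a ha))).trans f.map_zero⟩
  obtain ⟨g, hg⟩ := hF.exists_extension htor
    ((LinearMap.ker φ).liftQ f hkill ∘ₗ φ.quotKerEquivRange.symm.toLinearMap)
  have hgφ : g ∘ₗ φ = f := LinearMap.ext fun x => by
    have := congr($hg ⟨φ x, LinearMap.mem_range_self φ x⟩)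
    simpa [LinearMap.quotKerEquivRange_symm_apply_image] using this
  refine ⟨g, hgφ, fun g' hg' => hF.1.linearMap_ext htor ?_⟩
  rintro _ ⟨x, rfl⟩
  exact congr($(hg'.trans hgφ.symm) x)

end Lucas

theorem composite_is_lucas_envelope_with_ump_general (R : Type u) [CommRing R]
    (M : Type u) [AddCommGroup M] [Module R M]
    (T : Submodule R M)
    (hT : ∀ x : M, x ∈ T ↔ ∃ I : Ideal R, I.IsInQ ∧ ∀ a ∈ I, a • x = 0)
    (L : Type u) [AddCommGroup L] [Module R L] (hL : IsLucasModule R L)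
    (ι : (M ⧸ T) →ₗ[R] L) (hinj : Function.Injective ι)
    (htor : IsQTorsion R (L ⧸ LinearMap.range ι)) :
    (∀ F' : ModuleCat.{u} R, IsLucasModule R F' →
      Function.Surjective (fun h : L →ₗ[R] F' => h.comp (ι.comp T.mkQ))) ∧
    (∀ h : L →ₗ[R] L, h.comp (ι.comp T.mkQ) = ι.comp T.mkQ → Function.Bijective h) ∧
    (∀ F' : ModuleCat.{u} R, IsLucasModule R F' → ∀ f' : M →ₗ[R] F',
      ∃! g : L →ₗ[R] F', g.comp (ι.comp T.mkQ) = f') := by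
  have hker : IsQTorsion R (LinearMap.ker (ι ∘ₗ T.mkQ)) := fun ⟨x, hx⟩ => by
    rw [LinearMap.ker_comp, LinearMap.ker_eq_bot.2 hinj, Submodule.comap_bot, T.ker_mkQ] at hx
    obtain ⟨I, hI, hIx⟩ := (hT x).1 hx
    exact ⟨I, hI, fun a ha => Subtype.ext (hIx a ha)⟩
  have hrange : LinearMap.range (ι ∘ₗ T.mkQ) = LinearMap.range ι :=
    LinearMap.range_comp_of_range_eq_top ι T.range_mkQ
  have ump : ∀ F' : ModuleCat.{u} R, IsLucasModule R F' → ∀ f' : M →ₗ[R] F',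
      ∃! g : L →ₗ[R] F', g ∘ₗ ι ∘ₗ T.mkQ = f' := fun F' hF' =>
    hF'.existsUnique_comp_eq _ hker (hrange ▸ htor)
  refine ⟨fun F' hF' f' => (ump F' hF' f').exists, fun h hh => ?_, ump⟩
  obtain rfl : h = LinearMap.id :=
    (ump (ModuleCat.of R L) hL _).unique hh (LinearMap.id_comp _)
  exact Function.bijective_id

/-- Let `T = tor_𝒬(M)` and let `L` be a Lucas module containing `M/T` as an
essential submodule (via an injection `ι`) with `L/(M/T)` `𝒬`-torsion. Then the composite
`φ : M ↠ M/T ↪ L` is an `ℒ`-envelope of `M` with the unique mapping property. -/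
theorem composite_is_lucas_envelope_with_ump (R : Type u) [CommRing R]
    (M : Type u) [AddCommGroup M] [Module R M]
    (T : Submodule R M)
    (hT : ∀ x : M, x ∈ T ↔ ∃ I : Ideal R, I.IsInQ ∧ ∀ a ∈ I, a • x = 0)
    (L : Type u) [AddCommGroup L] [Module R L] (hL : IsLucasModule R L)
    (ι : (M ⧸ T) →ₗ[R] L) (hinj : Function.Injective ι)
    (hess : ∀ N : Submodule R L, LinearMap.range ι ⊓ N = ⊥ → N = ⊥)
    (htor : IsQTorsion R (L ⧸ LinearMap.range ι)) :
    (∀ F' : ModuleCat.{u} R, IsLucasModule R F' →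
      Function.Surjective (fun h : L →ₗ[R] F' => h.comp (ι.comp T.mkQ))) ∧
    (∀ h : L →ₗ[R] L, h.comp (ι.comp T.mkQ) = ι.comp T.mkQ → Function.Bijective h) ∧
    (∀ F' : ModuleCat.{u} R, IsLucasModule R F' → ∀ f' : M →ₗ[R] F',
      ∃! g : L →ₗ[R] F', g.comp (ι.comp T.mkQ) = f') :=
  composite_is_lucas_envelope_with_ump_general R M T hT L hL ι hinj htor
end

section
/- Let R be a commutative ring, I ∈ 𝒬 a finitely generated semi-regular ideal of R, and {M_i, φ_{i,j} | i, j ∈ Γ} a direct system of 𝒬-torsion-free R-modules over a directed index set Γ. Then the canonical map lim→ Hom_R(I, M_i) → Hom_R(I, lim→ M_i) is an isomorphism. -/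
open CategoryTheory

universe u

private lemma exists_factor {R A B C : Type*} [CommRing R] [AddCommGroup A] [Module R A]
    [AddCommGroup B] [Module R B] [AddCommGroup C] [Module R C]
    (p : A →ₗ[R] B) (h : A →ₗ[R] C) (hs : Function.Surjective p)
    (hk : LinearMap.ker p ≤ LinearMap.ker h) : ∃ g : B →ₗ[R] C, ∀ a, g (p a) = h a := by
  refine ⟨((LinearMap.ker p).liftQ h hk).comp
    (p.quotKerEquivOfSurjective hs).symm.toLinearMap, fun a => ?_⟩
  have e : (p.quotKerEquivOfSurjective hs).symm (p a) = Submodule.Quotient.mk a := by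
    apply (p.quotKerEquivOfSurjective hs).injective
    simp [LinearMap.quotKerEquivOfSurjective]
  simp [e]

/-- For `I ∈ 𝒬` and a direct system of `𝒬`-torsion-free modules over a
directed index set, the canonical map `lim→ Hom_R(I, Mᵢ) → Hom_R(I, lim→ Mᵢ)` is an
isomorphism. -/
theorem directLimit_hom_ideal_bijective (R : Type u) [CommRing R]
    (I : Ideal R) (hI : I.IsInQ)
    (Γ : Type u) [Preorder Γ] [IsDirected Γ (· ≤ ·)] [DecidableEq Γ]
    (M : Γ → Type u) [∀ i, AddCommGroup (M i)] [∀ i, Module R (M i)]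
    (φ : ∀ i j : Γ, i ≤ j → (M i →ₗ[R] M j))
    [DirectedSystem M (fun i j h => φ i j h)]
    (hM : ∀ i, IsQTorsionFree R (M i)) :
    Function.Bijective
      (Module.DirectLimit.lift R Γ (fun i => I →ₗ[R] M i)
        (fun i j h => LinearMap.llcomp R I (M i) (M j) (φ i j h))
        (fun i => LinearMap.llcomp R I (M i) (Module.DirectLimit M φ)
          (Module.DirectLimit.of R Γ M φ i))
        (fun i j hij g => by
          ext x
          simp [Module.DirectLimit.of_f])) := by
  classical
  rcases isEmpty_or_nonempty Γ with hΓ | hΓ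
  · exact ⟨fun a b _ => Subsingleton.elim a b, fun y => ⟨0, Subsingleton.elim _ _⟩⟩
  obtain ⟨S, hS⟩ := hI.1
  set v : ↑(S : Set R) → ↥I := fun a => ⟨a.1, by
    rw [← hS]; exact Ideal.subset_span a.2⟩ with hv_def
  have himg : I.subtype '' Set.range v = (S : Set R) := by
    ext x
    constructor
    · rintro ⟨_, ⟨a, rfl⟩, rfl⟩; exact a.2
    · intro hx; exact ⟨v ⟨x, hx⟩, ⟨⟨x, hx⟩, rfl⟩, rfl⟩
  have hv : Submodule.span R (Set.range v) = ⊤ := by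
    apply Submodule.map_injective_of_injective I.injective_subtype
    rw [Submodule.map_span, Submodule.map_top, Submodule.range_subtype, himg]
    exact hS
  -- key: annihilation by I implies zero
  have hann : ∀ (k : Γ) (z : M k), (∀ b : ↑(S : Set R), (b : R) • z = 0) → z = 0 := by
    intro k z hb
    refine hM k z ⟨I, ⟨⟨S, hS⟩, hI.2⟩, ?_⟩
    intro c hc
    have hc' : c ∈ Ideal.span (S : Set R) := by rw [hS]; exact hc
    refine Submodule.span_induction (p := fun c _ => c • z = 0)
      (fun y hy => hb ⟨y, hy⟩) (by simp)
      (fun y w _ _ hy hw => show (y + w) • z = 0 by rw [add_smul, hy, hw, add_zero])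
      (fun t y _ hy' => show (t • y) • z = 0 by
        rw [smul_eq_mul, mul_smul, hy', smul_zero]) hc'
  constructor
  · rw [injective_iff_map_eq_zero]
    intro z hz
    obtain ⟨i, g, rfl⟩ := Module.DirectLimit.exists_of z
    rw [Module.DirectLimit.lift_of] at hz
    have hz' : ∀ x : ↥I, Module.DirectLimit.of R Γ M φ i (g x) = 0 := by
      intro x
      have := LinearMap.congr_fun hz x
      simpa using this
    choose j hij hjz using fun a : ↑(S : Set R) =>
      Module.DirectLimit.of.zero_exact (hz' (v a))
    obtain ⟨k, hk⟩ := (insert i (Finset.univ.image j)).exists_le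
    have hik : i ≤ k := hk i (Finset.mem_insert_self _ _)
    have hjk : ∀ a, j a ≤ k := fun a =>
      hk (j a) (Finset.mem_insert_of_mem (Finset.mem_image_of_mem _ (Finset.mem_univ a)))
    have hgk : LinearMap.llcomp R I (M i) (M k) (φ i k hik) g = 0 := by
      apply LinearMap.ext_on_range hv
      intro a
      show φ i k hik (g (v a)) = 0
      rw [show φ i k hik (g (v a)) = φ (j a) k (hjk a) (φ i (j a) (hij a) (g (v a))) from
        (Module.DirectedSystem.map_map (f := φ) _ _ _).symm, hjz a, map_zero]
    calc Module.DirectLimit.of R Γ (fun i => ↥I →ₗ[R] M i)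
          (fun i j h => LinearMap.llcomp R I (M i) (M j) (φ i j h)) i g
        = Module.DirectLimit.of R Γ (fun i => ↥I →ₗ[R] M i)
          (fun i j h => LinearMap.llcomp R I (M i) (M j) (φ i j h)) k
          (LinearMap.llcomp R I (M i) (M k) (φ i k hik) g) :=
          (Module.DirectLimit.of_f (hij := hik)).symm
      _ = 0 := by rw [hgk, map_zero]
  · intro f
    -- choose representatives of f (v a)
    choose i₀f xf hxf using fun a : ↑(S : Set R) =>
      Module.DirectLimit.exists_of (f (v a))
    obtain ⟨i₀, hi₀⟩ := (Finset.univ.image i₀f).exists_le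
    have hi₀' : ∀ a, i₀f a ≤ i₀ := fun a =>
      hi₀ (i₀f a) (Finset.mem_image_of_mem _ (Finset.mem_univ a))
    set x : ↑(S : Set R) → M i₀ := fun a => φ (i₀f a) i₀ (hi₀' a) (xf a) with hx_def
    have hox : ∀ a, Module.DirectLimit.of R Γ M φ i₀ (x a) = f (v a) := fun a => by
      rw [hx_def]; rw [Module.DirectLimit.of_f]; exact hxf a
    -- relations hold in the limit
    have hrel0 : ∀ a b : ↑(S : Set R),
        Module.DirectLimit.of R Γ M φ i₀ ((a : R) • x b - (b : R) • x a) = 0 := by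
      intro a b
      rw [map_sub, map_smul, map_smul, hox, hox, ← map_smul, ← map_smul]
      have : (a : R) • v b = (b : R) • v a := Subtype.ext (mul_comm (a : R) (b : R))
      rw [this, sub_self]
    choose j2 hij2 hjz2 using fun ab : ↑(S : Set R) × ↑(S : Set R) =>
      Module.DirectLimit.of.zero_exact (hrel0 ab.1 ab.2)
    obtain ⟨k, hk⟩ := (insert i₀ (Finset.univ.image j2)).exists_le
    have hik : i₀ ≤ k := hk i₀ (Finset.mem_insert_self _ _)
    have hjk : ∀ ab, j2 ab ≤ k := fun ab =>
      hk (j2 ab) (Finset.mem_insert_of_mem (Finset.mem_image_of_mem _ (Finset.mem_univ ab)))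
    set y : ↑(S : Set R) → M k := fun a => φ i₀ k hik (x a) with hy_def
    have hoy : ∀ a, Module.DirectLimit.of R Γ M φ k (y a) = f (v a) := fun a => by
      rw [hy_def]; rw [Module.DirectLimit.of_f]; exact hox a
    have hrel : ∀ a b : ↑(S : Set R), (a : R) • y b = (b : R) • y a := by
      intro a b
      have h2 : φ i₀ k hik ((a : R) • x b - (b : R) • x a) = 0 := by
        rw [show φ i₀ k hik ((a : R) • x b - (b : R) • x a)
            = φ (j2 (a, b)) k (hjk (a, b)) (φ i₀ (j2 (a, b)) (hij2 (a, b))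
              ((a : R) • x b - (b : R) • x a)) from
          (Module.DirectedSystem.map_map (f := φ) _ _ _).symm, hjz2 (a, b), map_zero]
      rw [map_sub, map_smul, map_smul, sub_eq_zero] at h2
      exact h2
    -- build the map on I
    set p : (↑(S : Set R) →₀ R) →ₗ[R] ↥I := Finsupp.linearCombination R v with hp_def
    set h : (↑(S : Set R) →₀ R) →ₗ[R] M k := Finsupp.linearCombination R y with hh_def
    have hps : Function.Surjective p := by
      rw [← LinearMap.range_eq_top, hp_def, Finsupp.range_linearCombination, hv]
    have hker : LinearMap.ker p ≤ LinearMap.ker h := by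
      intro r hr
      rw [LinearMap.mem_ker] at hr ⊢
      have hr' : (r.sum fun a c => c * (a : R)) = 0 := by
        have := congrArg I.subtype hr
        rw [hp_def, Finsupp.apply_linearCombination] at this
        simpa [Finsupp.linearCombination_apply, smul_eq_mul] using this
      refine hann k (h r) ?_
      intro b
      rw [hh_def, Finsupp.linearCombination_apply, Finsupp.smul_sum]
      have : ∀ a ∈ r.support, (b : R) • r a • y a = (r a * (a : R)) • y b := by
        intro a _
        rw [smul_comm, hrel b a, smul_smul]
      rw [Finsupp.sum, Finset.sum_congr rfl this, ← Finset.sum_smul]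
      rw [show (∑ a ∈ r.support, r a * (a : R)) = r.sum fun a c => c * (a : R) from rfl, hr',
        zero_smul]
    obtain ⟨g, hg⟩ := exists_factor p h hps hker
    refine ⟨Module.DirectLimit.of R Γ (fun i => ↥I →ₗ[R] M i)
      (fun i j h => LinearMap.llcomp R I (M i) (M j) (φ i j h)) k g, ?_⟩
    rw [Module.DirectLimit.lift_of]
    apply LinearMap.ext_on_range hv
    intro a
    show Module.DirectLimit.of R Γ M φ k (g (v a)) = f (v a)
    have hva : v a = p (Finsupp.single a 1) := by
      rw [hp_def, Finsupp.linearCombination_single, one_smul]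
    have hgv : g (v a) = y a := by
      rw [hva, hg, hh_def, Finsupp.linearCombination_single, one_smul]
    rw [hgv, hoy]
end

section
/- Let R be a commutative ring such that R itself is a Lucas R-module (i.e., R is a WQ-ring). If every R-module has a Lucas cover with the unique mapping property, then every R-module is a Lucas module. -/
open CategoryTheory

universe u

/-- Let `R` be a WQ-ring, i.e. `R` is a Lucas module over itself. If every
`R`-module has a Lucas cover with the unique mapping property, then every `R`-module is a
Lucas module. -/
theorem wq_ring_covers_ump_imp_all_lucas (R : Type u) [CommRing R]
    (hR : IsLucasModule R R)
    (hcov : ∀ M : ModuleCat.{u} R,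
      ∃ (C : ModuleCat.{u} R) (f : C →ₗ[R] M),
        IsLucasModule R C ∧
        (∀ C' : ModuleCat.{u} R, IsLucasModule R C' →
          Function.Surjective (fun g : C' →ₗ[R] C => f.comp g)) ∧
        (∀ h : C →ₗ[R] C, f.comp h = f → Function.Bijective h) ∧
        -- the unique mapping property
        (∀ C' : ModuleCat.{u} R, IsLucasModule R C' → ∀ f' : C' →ₗ[R] M,
          ∃! g : C' →ₗ[R] C, f.comp g = f')) :
    ∀ (M : Type u) [AddCommGroup M] [Module R M], IsLucasModule R M := by
  intro M _ _
  obtain ⟨C, f, hC, hpre, hcover, hump⟩ := hcov (ModuleCat.of R M)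
  have hRL : IsLucasModule R ↑(ModuleCat.of R R) := hR
  -- f is surjective
  have hsurj : Function.Surjective f := by
    intro x
    obtain ⟨g, hg⟩ := hpre (ModuleCat.of R R) hRL (LinearMap.toSpanSingleton R M x)
    refine ⟨g (1:R), ?_⟩
    have := congrArg (fun h : (ModuleCat.of R R) →ₗ[R] (ModuleCat.of R M) => h (1:R)) hg
    simp only [LinearMap.comp_apply] at this
    rw [this]
    exact one_smul R x
  -- f is injective
  have hinj : Function.Injective f := by
    rw [injective_iff_map_eq_zero]
    intro c hc
    obtain ⟨g, hg, huniq⟩ := hump (ModuleCat.of R R) hRL 0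
    have h1 : f.comp (LinearMap.toSpanSingleton R C c) = 0 := by
      ext
      simp [LinearMap.toSpanSingleton_apply, hc]
    have h2 : (LinearMap.toSpanSingleton R C c) = (0 : (ModuleCat.of R R) →ₗ[R] C) := by
      rw [huniq _ h1, huniq 0 (by ext; simp)]
    have := congrArg (fun h : (ModuleCat.of R R) →ₗ[R] C => h (1:R)) h2
    simp only [LinearMap.zero_apply] at this
    calc c = (1:R) • c := (one_smul R c).symm
    _ = 0 := this
  let e : C ≃ₗ[R] M := LinearEquiv.ofBijective f ⟨hinj, hsurj⟩
  constructor
  · intro x ⟨I, hI, hann⟩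
    have : e.symm x = 0 := by
      refine hC.1 (e.symm x) ⟨I, hI, fun a ha => ?_⟩
      rw [← map_smul]
      rw [hann a ha]
      exact map_zero _
    have := congrArg e this
    simpa [LinearMap.toSpanSingleton_apply] using this
  · intro I hI
    have hext := hC.2 I hI
    unfold Ext1Vanishes at hext ⊢
    let F := (Ext R (ModuleCat.{u} R) 1).obj (Opposite.op (ModuleCat.of R (R ⧸ I)))
    let i : ModuleCat.of R ↑C ≅ ModuleCat.of R M := e.toModuleIso
    haveI : Subsingleton ↑(F.obj (ModuleCat.of R ↑C)) := hext
    exact Equiv.subsingleton ((F.mapIso i).toLinearEquiv.toEquiv.symm)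
end

section
/- Let R be an integral domain with quotient field Q, and let 𝒱 be the class of R-modules whose R-module structure extends to a Q-vector space structure. Then every R-module has a 𝒱-cover with the unique mapping property. -/
open CategoryTheory

universe u

/-- The `R`-module structure on `M` extends to a vector space structure over the quotient
field `Q = Frac(R)`, compatibly with the `R`-action via the inclusion `R → Q`. -/
def ExtendsToFractionModule (R : Type u) [CommRing R] [IsDomain R]
    (M : Type u) [AddCommGroup M] [Module R M] : Prop :=
  ∃ inst : Module (FractionRing R) M,
    ∀ (r : R) (m : M), (haveI := inst; (algebraMap R (FractionRing R) r) • m) = r • m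

section Aux

variable {R : Type u} [CommRing R] [IsDomain R]
variable {M : Type u} [AddCommGroup M] [Module R M]

noncomputable instance homQModule : Module (FractionRing R) (FractionRing R →ₗ[R] M) where
  smul q φ := φ.comp (LinearMap.mul R (FractionRing R) q)
  one_smul φ := by
    ext x
    show φ (1 * x) = φ x
    rw [one_mul]
  mul_smul q₁ q₂ φ := by
    ext x
    show φ (q₁ * q₂ * x) = φ (q₂ * (q₁ * x))
    ring_nf
  smul_zero q := by
    ext x
    show (0 : FractionRing R →ₗ[R] M) (q * x) = 0
    simp
  smul_add q φ ψ := by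
    ext x
    show (φ + ψ) (q * x) = φ (q * x) + ψ (q * x)
    simp
  add_smul q₁ q₂ φ := by
    ext x
    show φ ((q₁ + q₂) * x) = φ (q₁ * x) + φ (q₂ * x)
    rw [add_mul, map_add]
  zero_smul φ := by
    ext x
    show φ (0 * x) = 0
    simp

theorem homQ_smul_apply (q x : FractionRing R) (ψ : FractionRing R →ₗ[R] M) :
    (q • ψ) x = ψ (q * x) := rfl

theorem homQ_compat (r : R) (ψ : FractionRing R →ₗ[R] M) :
    (algebraMap R (FractionRing R) r) • ψ = r • ψ := by
  ext x
  rw [homQ_smul_apply, ← Algebra.smul_def, map_smul, LinearMap.smul_apply]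

theorem tfC {s : R} (hs : s ≠ 0) {ψ : FractionRing R →ₗ[R] M} (h : s • ψ = 0) : ψ = 0 := by
  have hs' : (algebraMap R (FractionRing R) s) ≠ 0 := by
    simpa [IsFractionRing.to_map_eq_zero_iff] using hs
  ext y
  simp only [LinearMap.zero_apply]
  have h2 : ψ (s • ((algebraMap R (FractionRing R) s)⁻¹ * y)) = 0 := by
    rw [map_smul, ← LinearMap.smul_apply, h, LinearMap.zero_apply]
  rwa [Algebra.smul_def, ← mul_assoc, mul_inv_cancel₀ hs', one_mul] at h2

theorem h_qlinear {V : Type u} [AddCommGroup V] [Module R V]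
    [Module (FractionRing R) V]
    (compat : ∀ (r : R) (v : V), (algebraMap R (FractionRing R) r) • v = r • v)
    (h : V →ₗ[R] (FractionRing R →ₗ[R] M)) (q : FractionRing R) (v : V) :
    h (q • v) = q • h v := by
  obtain ⟨⟨a, s⟩, hq⟩ := IsLocalization.surj (nonZeroDivisors R) q
  have hs0 : (s : R) ≠ 0 := nonZeroDivisors.ne_zero s.2
  have e1 : (s : R) • h (q • v) = a • h v := by
    rw [← map_smul, ← compat, ← mul_smul, mul_comm, hq, compat, map_smul]
  have e2 : (s : R) • (q • h v) = a • h v := by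
    rw [← homQ_compat, ← mul_smul, mul_comm, hq, homQ_compat]
  have e3 : (s : R) • (h (q • v) - q • h v) = 0 := by
    rw [smul_sub, e1, e2, sub_self]
  exact sub_eq_zero.mp (tfC hs0 e3)

noncomputable def liftV {V : Type u} [AddCommGroup V] [Module R V]
    [Module (FractionRing R) V]
    (compat : ∀ (r : R) (v : V), (algebraMap R (FractionRing R) r) • v = r • v)
    (g : V →ₗ[R] M) : V →ₗ[R] (FractionRing R →ₗ[R] M) where
  toFun v :=
    { toFun := fun q => g (q • v)
      map_add' := fun q₁ q₂ => by
        show g ((q₁ + q₂) • v) = g (q₁ • v) + g (q₂ • v)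
        rw [add_smul, map_add]
      map_smul' := fun r q => by
        show g ((r • q) • v) = r • g (q • v)
        rw [Algebra.smul_def, mul_smul, compat, map_smul] }
  map_add' v₁ v₂ := by
    ext q
    simp [smul_add]
  map_smul' r v := by
    ext q
    simp only [LinearMap.coe_mk, AddHom.coe_mk, RingHom.id_apply, LinearMap.smul_apply]
    rw [← compat r v, ← mul_smul, mul_comm, mul_smul, compat, map_smul]

@[simp] theorem liftV_apply {V : Type u} [AddCommGroup V] [Module R V]
    [Module (FractionRing R) V]
    (compat : ∀ (r : R) (v : V), (algebraMap R (FractionRing R) r) • v = r • v)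
    (g : V →ₗ[R] M) (v : V) (q : FractionRing R) :
    liftV compat g v q = g (q • v) := rfl

noncomputable def ev1 : (FractionRing R →ₗ[R] M) →ₗ[R] M where
  toFun ψ := ψ 1
  map_add' := fun _ _ => rfl
  map_smul' := fun _ _ => rfl

theorem eq_liftV {V : Type u} [AddCommGroup V] [Module R V]
    [Module (FractionRing R) V]
    (compat : ∀ (r : R) (v : V), (algebraMap R (FractionRing R) r) • v = r • v)
    (g : V →ₗ[R] M) (h : V →ₗ[R] (FractionRing R →ₗ[R] M))
    (hh : ∀ v, h v 1 = g v) : h = liftV compat g := by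
  have key : ∀ v q, (h - liftV compat g) v q = 0 := by
    intro v q
    have hq : (h - liftV compat g) v q = ((h - liftV compat g) (q • v)) 1 := by
      rw [h_qlinear compat (h - liftV compat g) q v]
      rw [homQ_smul_apply, mul_one]
    rw [hq]
    simp only [LinearMap.sub_apply, liftV_apply, one_smul, hh, sub_self]
  have : h - liftV compat g = 0 := by
    ext v q; exact key v q
  exact sub_eq_zero.mp this

end Aux

/-- Over an integral domain `R` with quotient field `Q`, every `R`-module
has a `𝒱`-cover with the unique mapping property, where `𝒱` is the class of `R`-modules
whose module structure extends to a `Q`-vector space structure. -/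
theorem exists_vector_space_cover_with_ump (R : Type u) [CommRing R] [IsDomain R]
    (M : Type u) [AddCommGroup M] [Module R M] :
    ∃ (C : ModuleCat.{u} R) (f : C →ₗ[R] M),
      ExtendsToFractionModule R C ∧
      (∀ C' : ModuleCat.{u} R, ExtendsToFractionModule R C' →
        Function.Surjective (fun g : C' →ₗ[R] C => f.comp g)) ∧
      (∀ h : C →ₗ[R] C, f.comp h = f → Function.Bijective h) ∧
      -- the unique mapping property
      (∀ C' : ModuleCat.{u} R, ExtendsToFractionModule R C' → ∀ f' : C' →ₗ[R] M,
        ∃! g : C' →ₗ[R] C, f.comp g = f') := by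
  refine ⟨ModuleCat.of R (FractionRing R →ₗ[R] M), ev1, ⟨homQModule, homQ_compat⟩, ?_, ?_, ?_⟩
  · rintro C' ⟨inst, compat⟩ g
    letI := inst
    refine ⟨liftV compat g, ?_⟩
    show ev1.comp (liftV compat g) = g
    ext v
    show liftV compat g v 1 = g v
    rw [liftV_apply, one_smul]
  · intro h hh
    have h1 : h = liftV (homQ_compat (R := R) (M := M)) ev1 :=
      eq_liftV _ ev1 h (fun v => DFunLike.congr_fun hh v)
    have h2 : LinearMap.id = liftV (homQ_compat (R := R) (M := M)) ev1 :=
      eq_liftV _ ev1 LinearMap.id (fun v => rfl)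
    rw [h1.trans h2.symm]
    exact Function.bijective_id
  · rintro C' ⟨inst, compat⟩ f'
    letI := inst
    refine ⟨liftV compat f', ?_, ?_⟩
    · ext v
      show liftV compat f' v 1 = f' v
      rw [liftV_apply, one_smul]
    · intro g hg
      exact eq_liftV compat f' g (fun v => DFunLike.congr_fun hg v)
end
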